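/- arXiv:2203.01088 — 11 statements merged into one kernel-verified Lean document; each statement's English description precedes it below -/
import Mathlib

section
/- Let T be a nontrivial tree. Then the proper conflict-free chromatic number of T equals 2 if T = K_2, and equals 3 otherwise. -/
open SimpleGraph

/-- A proper conflict-free coloring: proper, and every non-isolated vertex has a color
appearing exactly once in its open neighborhood. -/
def IsPCFColoring {V : Type*} (G : SimpleGraph V) {n : ℕ} (c : V → Fin n) : Prop :=
  (∀ u v, G.Adj u v → c u ≠ c v) ∧
  ∀ v : V, (G.neighborSet v).Nonempty →
    ∃ k : Fin n, ∃! u, u ∈ G.neighborSet v ∧ c u = k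

/-- The PCF chromatic number. -/
noncomputable def pcfChromNum {V : Type*} (G : SimpleGraph V) : ℕ :=
  sInf {n | ∃ c : V → Fin n, IsPCFColoring G c}

/-- The chromatic number (as a natural number). -/
noncomputable def chromNum {V : Type*} (G : SimpleGraph V) : ℕ :=
  sInf {n | G.Colorable n}

set_option linter.unusedSectionVars false

section Aux

variable {V : Type*} [DecidableEq V] {T : SimpleGraph V}

lemma aux_concat_isPath {u v w : V} {p : T.Walk u v} (hp : p.IsPath) (h : T.Adj v w)
    (hw : w ∉ p.support) : (p.concat h).IsPath := by
  rw [← Walk.isPath_reverse_iff, Walk.reverse_concat, Walk.cons_isPath_iff]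
  exact ⟨hp.reverse, by simpa [Walk.support_reverse] using hw⟩

lemma aux_dist_le_of_mem_support {r u x : V} (p : T.Walk r u) (hx : x ∈ p.support) :
    T.dist r x ≤ p.length :=
  le_trans (SimpleGraph.dist_le (p.takeUntil x hx)) (Walk.length_takeUntil_le p hx)

lemma aux_eq_end_of_mem_support {r u x : V} {p : T.Walk r u} (hx : x ∈ p.support)
    (hdx : p.length ≤ T.dist r x) : x = u := by
  have h1 : T.dist r x ≤ (p.takeUntil x hx).length := SimpleGraph.dist_le _
  have h2 : (p.takeUntil x hx).length + (p.dropUntil x hx).length = p.length := by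
    have h := congrArg Walk.length (p.take_spec hx)
    rwa [Walk.length_append] at h
  have h3 : (p.dropUntil x hx).length = 0 := by omega
  exact Walk.eq_of_length_eq_zero h3

lemma aux_exists_shortest_path (hconn : T.Connected) (r v : V) :
    ∃ p : T.Walk r v, p.IsPath ∧ p.length = T.dist r v := by
  obtain ⟨w, hw⟩ := hconn.exists_walk_length_eq_dist r v
  refine ⟨w.bypass, w.bypass_isPath, le_antisymm ?_ (SimpleGraph.dist_le _)⟩
  exact hw ▸ w.length_bypass_le

lemma aux_adj_dist (hconn : T.Connected) (hacyc : T.IsAcyclic) (r : V) {u v : V}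
    (huv : T.Adj u v) : T.dist r u + 1 = T.dist r v ∨ T.dist r v + 1 = T.dist r u := by
  obtain ⟨p, hp, hlp⟩ := aux_exists_shortest_path hconn r u
  obtain ⟨q, hq, hlq⟩ := aux_exists_shortest_path hconn r v
  have h1 : T.dist r v ≤ T.dist r u + 1 := by
    have := SimpleGraph.dist_le (p.concat huv)
    rwa [Walk.length_concat, hlp] at this
  have h2 : T.dist r u ≤ T.dist r v + 1 := by
    have := SimpleGraph.dist_le (q.concat huv.symm)
    rwa [Walk.length_concat, hlq] at this
  have hne : T.dist r u ≠ T.dist r v := by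
    intro heq
    have hvp : v ∉ p.support := by
      intro hvp
      exact huv.ne (aux_eq_end_of_mem_support hvp (by omega)).symm
    have hcp : (p.concat huv).IsPath := aux_concat_isPath hp huv hvp
    have heq2 := hacyc.path_unique ⟨p.concat huv, hcp⟩ ⟨q, hq⟩
    have := congrArg (fun P : T.Path r v => P.1.length) heq2
    simp only [Walk.length_concat] at this
    omega
  omega

lemma aux_exists_unique_parent (hconn : T.Connected) (hacyc : T.IsAcyclic) {r v : V}
    (hd : T.dist r v ≠ 0) : ∃! u, T.Adj v u ∧ T.dist r u + 1 = T.dist r v := by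
  have hrv : r ≠ v := fun h => hd (h ▸ SimpleGraph.dist_self)
  obtain ⟨w, hw⟩ := hconn.exists_walk_length_eq_dist r v
  obtain ⟨u, hadj, q, hq⟩ := Walk.exists_eq_cons_of_ne (Ne.symm hrv) w.reverse
  have hlen : q.length + 1 = T.dist r v := by
    have := congrArg Walk.length hq
    simp only [Walk.length_reverse, Walk.length_cons] at this
    omega
  have hdu : T.dist r u + 1 = T.dist r v := by
    have h1 : T.dist r u ≤ q.length := by
      have := SimpleGraph.dist_le q.reverse
      simpa using this
    have h2 : T.dist r v ≤ T.dist r u + 1 := by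
      obtain ⟨p, hp, hlp⟩ := aux_exists_shortest_path hconn r u
      have := SimpleGraph.dist_le (p.concat hadj.symm)
      rwa [Walk.length_concat, hlp] at this
    omega
  refine ⟨u, ⟨hadj, hdu⟩, ?_⟩
  rintro u' ⟨hadj', hdu'⟩
  obtain ⟨p, hp, hlp⟩ := aux_exists_shortest_path hconn r u
  obtain ⟨p', hp', hlp'⟩ := aux_exists_shortest_path hconn r u'
  have hvp : v ∉ p.support := by
    intro hm
    have := aux_dist_le_of_mem_support p hm
    omega
  have hvp' : v ∉ p'.support := by
    intro hm
    have := aux_dist_le_of_mem_support p' hm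
    omega
  have h1 : (p.concat hadj.symm).IsPath := aux_concat_isPath hp _ hvp
  have h2 : (p'.concat hadj'.symm).IsPath := aux_concat_isPath hp' _ hvp'
  have heq := hacyc.path_unique ⟨p'.concat hadj'.symm, h2⟩ ⟨p.concat hadj.symm, h1⟩
  have heq' : p'.concat hadj'.symm = p.concat hadj.symm := congrArg Subtype.val heq
  obtain ⟨hv, -⟩ := Walk.concat_inj heq'
  exact hv

lemma aux_exists_adj (hconn : T.Connected) {x y : V} (hxy : x ≠ y) : ∃ z, T.Adj x z := by
  obtain ⟨w⟩ := hconn.preconnected x y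
  obtain ⟨z, h, _, _⟩ := Walk.exists_eq_cons_of_ne hxy w
  exact ⟨z, h⟩

lemma aux_exists_two_neighbors [Fintype V] (hconn : T.Connected)
    (h3 : 3 ≤ Fintype.card V) :
    ∃ v a b, a ≠ b ∧ T.Adj v a ∧ T.Adj v b := by
  classical
  obtain ⟨u, v, huv⟩ : ∃ u v, T.Adj u v := by
    obtain ⟨x, y, hxy⟩ := Fintype.exists_pair_of_one_lt_card (α := V) (by omega)
    obtain ⟨z, hz⟩ := aux_exists_adj hconn hxy
    exact ⟨x, z, hz⟩
  obtain ⟨w, hwu, hwv⟩ : ∃ w, w ≠ u ∧ w ≠ v := by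
    by_contra h
    push_neg at h
    have hsub : (Finset.univ : Finset V) ⊆ {u, v} := by
      intro x _
      rcases eq_or_ne x u with h1 | h1
      · simp [h1]
      · simp [h x h1]
    have := Finset.card_le_card hsub
    have hle : ({u, v} : Finset V).card ≤ 2 :=
      le_trans (Finset.card_insert_le _ _) (by simp)
    rw [Finset.card_univ] at this
    omega
  obtain ⟨wk⟩ := hconn.preconnected u w
  have hp := wk.bypass_isPath
  obtain ⟨b, hub, q, hq⟩ := Walk.exists_eq_cons_of_ne (Ne.symm hwu) wk.bypass
  rw [hq, Walk.cons_isPath_iff] at hp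
  rcases eq_or_ne b v with hbv | hbv
  · subst hbv
    obtain ⟨z, hvz, q', hq'⟩ := Walk.exists_eq_cons_of_ne (Ne.symm hwv) q
    have hzq : z ∈ q.support := by
      rw [hq', Walk.support_cons]
      exact List.mem_cons_of_mem _ q'.start_mem_support
    have hzu : z ≠ u := fun h => hp.2 (h ▸ hzq)
    exact ⟨b, u, z, hzu.symm, huv.symm, hvz⟩
  · exact ⟨u, v, b, Ne.symm hbv, huv, hub⟩

lemma aux_fin2 : ∀ x y z : Fin 2, x ≠ z → y ≠ z → x = y := by decide

end Aux

theorem pcf_tree {V : Type*} [Fintype V] (T : SimpleGraph V)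
    (hconn : T.Connected) (hacyc : T.IsAcyclic) (hcard : 2 ≤ Fintype.card V) :
    pcfChromNum T = if Fintype.card V = 2 then 2 else 3 := by
  classical
  have hV : Nonempty V := Fintype.card_pos_iff.mp (by omega)
  obtain ⟨u0, v0', huv0⟩ : ∃ u v, T.Adj u v := by
    obtain ⟨x, y, hxy⟩ := Fintype.exists_pair_of_one_lt_card (α := V) (by omega)
    obtain ⟨z, hz⟩ := aux_exists_adj hconn hxy
    exact ⟨x, z, hz⟩
  -- lower bound 2
  have h0 : ∀ m, (∃ c : V → Fin m, IsPCFColoring T c) → 2 ≤ m := by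
    rintro m ⟨c, hc⟩
    by_contra hm
    push_neg at hm
    interval_cases m
    · exact (c u0).elim0
    · exact hc.1 u0 v0' huv0 (Subsingleton.elim _ _)
  -- the 3-coloring construction
  have h3mem : ∃ c : V → Fin 3, IsPCFColoring T c := by
    obtain ⟨v0⟩ := hV
    obtain ⟨r, -, hrmax⟩ := Finset.exists_max_image Finset.univ (T.dist v0)
      ⟨v0, Finset.mem_univ v0⟩
    have hd0 : T.dist v0 r ≠ 0 := by
      intro h
      have hall : ∀ x : V, x = v0 := by
        intro x
        have hx := hrmax x (Finset.mem_univ x)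
        exact (hconn.dist_eq_zero_iff.mp (by omega)).symm
      have : Fintype.card V ≤ 1 :=
        Fintype.card_le_one_iff.mpr fun a b => (hall a).trans (hall b).symm
      omega
    obtain ⟨p0, ⟨hp0adj, hp0d⟩, hp0uniq⟩ := aux_exists_unique_parent hconn hacyc hd0
    have hrleaf : ∀ z, T.Adj r z → z = p0 := by
      intro z hz
      rcases aux_adj_dist hconn hacyc v0 hz with h | h
      · exact absurd (hrmax z (Finset.mem_univ z)) (by omega)
      · exact hp0uniq z ⟨hz, h⟩
    refine ⟨fun x => ⟨T.dist r x % 3, Nat.mod_lt _ (by norm_num)⟩, ?_, ?_⟩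
    · intro a b hab hcab
      have hv : T.dist r a % 3 = T.dist r b % 3 := congrArg Fin.val hcab
      rcases aux_adj_dist hconn hacyc r hab with h | h <;> omega
    · rintro v ⟨w, hw⟩
      have hw' : T.Adj v w := hw
      by_cases hvr : v = r
      · refine ⟨_, w, ⟨hw, rfl⟩, ?_⟩
        rintro y ⟨hy, -⟩
        have hy' : T.Adj r y := hvr ▸ (hy : T.Adj v y)
        have hw2 : T.Adj r w := hvr ▸ hw'
        rw [hrleaf y hy', hrleaf w hw2]
      · have hd : T.dist r v ≠ 0 := fun h => hvr (hconn.dist_eq_zero_iff.mp h).symm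
        obtain ⟨u, ⟨huadj, hud⟩, huniq⟩ := aux_exists_unique_parent hconn hacyc hd
        refine ⟨_, u, ⟨huadj, rfl⟩, ?_⟩
        rintro y ⟨hyN, hyc⟩
        have hy : T.Adj v y := hyN
        have hval : T.dist r y % 3 = T.dist r u % 3 := congrArg Fin.val hyc
        rcases aux_adj_dist hconn hacyc r hy with h | h
        · exact absurd hval (by omega)
        · exact huniq y ⟨hy, h⟩
  by_cases h2 : Fintype.card V = 2
  · rw [if_pos h2]
    -- a 2-coloring exists
    have h2mem : ∃ c : V → Fin 2, IsPCFColoring T c := by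
      have hcards : ({u0, v0'} : Finset V).card = 2 := by
        rw [Finset.card_insert_of_notMem (by simp [huv0.ne]), Finset.card_singleton]
      have huniv : ({u0, v0'} : Finset V) = Finset.univ :=
        Finset.eq_univ_of_card _ (hcards.trans h2.symm)
      have hall : ∀ x : V, x = u0 ∨ x = v0' := by
        intro x
        have : x ∈ ({u0, v0'} : Finset V) := huniv ▸ Finset.mem_univ x
        simpa using this
      refine ⟨fun x => if x = u0 then 0 else 1, ?_, ?_⟩
      · intro a b hab hcab
        rcases hall a with ha | ha <;> rcases hall b with hb | hb <;> subst ha <;> subst hb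
        · exact hab.ne rfl
        · simp [huv0.ne'] at hcab
        · simp [huv0.ne'] at hcab
        · exact hab.ne rfl
      · rintro x ⟨w, hw⟩
        have hw' : T.Adj x w := hw
        refine ⟨_, w, ⟨hw, rfl⟩, ?_⟩
        rintro y ⟨hyN, -⟩
        have hy' : T.Adj x y := hyN
        rcases hall x with hx | hx <;> subst hx
        · rcases hall y with h | h
          · exact absurd h hy'.ne'
          · rcases hall w with h' | h'
            · exact absurd h' hw'.ne'
            · rw [h, h']
        · rcases hall y with h | h
          · rcases hall w with h' | h'
            · rw [h, h']
            · exact absurd h' hw'.ne'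
          · exact absurd h hy'.ne'
    refine le_antisymm (Nat.sInf_le h2mem) (le_csInf ⟨2, h2mem⟩ ?_)
    intro m hm
    exact h0 m hm
  · rw [if_neg h2]
    have h3card : 3 ≤ Fintype.card V := by omega
    have hlow : ∀ m ∈ {n | ∃ c : V → Fin n, IsPCFColoring T c}, 3 ≤ m := by
      rintro m ⟨c, hc⟩
      by_contra hm
      push_neg at hm
      have h2le := h0 m ⟨c, hc⟩
      have hm2 : m = 2 := by omega
      subst hm2
      obtain ⟨v, a, b, hab, hva, hvb⟩ := aux_exists_two_neighbors hconn h3card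
      obtain ⟨k, u, ⟨huN, huk⟩, huniq⟩ := hc.2 v ⟨a, hva⟩
      have hu : T.Adj v u := huN
      have hau : c a = c u :=
        aux_fin2 _ _ _ (fun h => hc.1 v a hva h.symm) (fun h => hc.1 v u hu h.symm)
      have hbu : c b = c u :=
        aux_fin2 _ _ _ (fun h => hc.1 v b hvb h.symm) (fun h => hc.1 v u hu h.symm)
      have ha' := huniq a ⟨hva, hau.trans huk⟩
      have hb' := huniq b ⟨hvb, hbu.trans huk⟩
      exact hab (ha'.trans hb'.symm)
    exact le_antisymm (Nat.sInf_le h3mem) (le_csInf ⟨3, h3mem⟩ hlow)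
end

section
/- For every n ≥ 3, the proper conflict-free chromatic number of the cycle C_n equals 3 if 3 divides n, equals 5 if n = 5, and equals 4 otherwise. -/
open SimpleGraph

/-!
Every vertex of `C_n` has exactly two neighbours, so some colour occurs exactly once in `N(v)`
iff the two neighbours of `v` get different colours. Hence the PCF colourings of `C_n` are
exactly the proper colourings of its square, in which vertices at distance at most two differ.

Three consecutive vertices already need three colours. With only three colours, `c (v + 3)` and
`c v` both avoid the two distinct colours of `v + 1, v + 2`, so the colouring is `3`-periodic,
which forces `3 ∣ n`. The square of `C_5` is `K_5`, so it needs five colours. Conversely, colour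
`0 1 2 0 1 2 …` when `3 ∣ n`, and when `n = 3p + 4q` (every `n ≥ 3` with `3 ∤ n` except `5`)
concatenate `p` blocks `0 1 2` and `q` blocks `0 1 2 3`.
-/

theorem exists_existsUnique_mem_pair_iff {V β : Type*} {a b : V} (hab : a ≠ b) (c : V → β) :
    (∃ k, ∃! u, u ∈ ({a, b} : Set V) ∧ c u = k) ↔ c a ≠ c b := by
  constructor
  · rintro ⟨k, u, ⟨hu, rfl⟩, huniq⟩ hcab
    have hcu : c a = c u ∧ c b = c u := by
      rcases hu with rfl | rfl <;> simp [hcab]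
    exact hab ((huniq a ⟨by simp, hcu.1⟩).trans (huniq b ⟨by simp, hcu.2⟩).symm)
  · intro hcab
    refine ⟨c a, a, ⟨by simp, rfl⟩, ?_⟩
    rintro u ⟨rfl | rfl, hcu⟩
    · rfl
    · exact absurd hcu.symm hcab

theorem IsPCFColoring.castLE {V : Type*} {G : SimpleGraph V} {m m' : ℕ} {c : V → Fin m}
    (hc : IsPCFColoring G c) (h : m ≤ m') : IsPCFColoring G (Fin.castLE h ∘ c) := by
  refine ⟨fun u v huv => (Fin.castLE_injective h).ne (hc.1 u v huv), fun v hv => ?_⟩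
  obtain ⟨k, hk⟩ := hc.2 v hv
  exact ⟨Fin.castLE h k, by
    simpa only [Function.comp_apply, (Fin.castLE_injective h).eq_iff] using hk⟩

theorem pcfChromNum_eq_succ_iff {V : Type*} (G : SimpleGraph V) (k : ℕ) :
    pcfChromNum G = k + 1 ↔
      (∃ c : V → Fin (k + 1), IsPCFColoring G c) ∧ ¬∃ c : V → Fin k, IsPCFColoring G c :=
  Nat.sInf_upward_closed_eq_succ_iff (by rintro _ _ h ⟨_, hc⟩; exact ⟨_, hc.castLE h⟩) k

theorem eq_of_ne_of_ne_of_card_eq_three {α : Type*} [Fintype α] (hα : Fintype.card α = 3)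
    {a b x y : α} (hab : a ≠ b) (hxa : x ≠ a) (hxb : x ≠ b) (hya : y ≠ a) (hyb : y ≠ b) :
    x = y := by
  classical
  have huniv : ({a, b, x} : Finset α) = Finset.univ := Finset.eq_univ_of_card _ <| by
    rw [Finset.card_eq_three.2 ⟨a, b, x, hab, hxa.symm, hxb.symm, rfl⟩, hα]
  have hy := huniv ▸ Finset.mem_univ y
  simp only [Finset.mem_insert, Finset.mem_singleton, hya, hyb, false_or] at hy
  exact hy.symm

theorem fin_two_ne_zero (n : ℕ) : (2 : Fin (n + 3)) ≠ 0 := by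
  simp [Fin.ext_iff, Nat.mod_eq_of_lt (show 2 < n + 3 by omega)]

def IsCycleSquareColoring {n : ℕ} {α : Type*} (c : Fin (n + 3) → α) : Prop :=
  ∀ v, c v ≠ c (v + 1) ∧ c v ≠ c (v + 2)

theorem isPCFColoring_cycleGraph_iff {n m : ℕ} (c : Fin (n + 3) → Fin m) :
    IsPCFColoring (cycleGraph (n + 3)) c ↔ IsCycleSquareColoring c := by
  have hadj (u v : Fin (n + 3)) : (cycleGraph (n + 3)).Adj u v ↔ u = v + 1 ∨ v = u + 1 := by
    rw [cycleGraph_adj, sub_eq_iff_eq_add', sub_eq_iff_eq_add', add_comm v, add_comm u]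
  have hshift (v : Fin (n + 3)) : v - 1 + 2 = v + 1 := by
    rw [sub_add_eq_add_sub, sub_eq_iff_eq_add, add_assoc]; rfl
  have hpair (v : Fin (n + 3)) : v - 1 ≠ v + 1 := by
    rw [← hshift, ne_eq, left_eq_add]
    exact fin_two_ne_zero n
  simp only [IsPCFColoring, IsCycleSquareColoring, cycleGraph_neighborSet,
    exists_existsUnique_mem_pair_iff (hpair _), Set.insert_nonempty, forall_const, forall_and]
  refine and_congr ⟨fun h v => h _ _ ((hadj _ _).2 (Or.inr rfl)), ?_⟩
    ⟨fun h v => ?_, fun h v => hshift v ▸ h (v - 1)⟩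
  · rintro h u v huv
    rcases (hadj u v).1 huv with rfl | rfl
    exacts [(h v).symm, h u]
  · have hv := h (v + 1)
    rw [add_sub_cancel_right, add_assoc] at hv
    exact hv

namespace IsCycleSquareColoring

variable {n : ℕ} {α : Type*} {c : Fin (n + 3) → α}

theorem three_le_card [Fintype α] (hc : IsCycleSquareColoring c) : 3 ≤ Fintype.card α := by
  classical
  rw [← Finset.card_eq_three.2 ⟨_, _, _, (hc 0).1, (hc 0).2, (hc 1).1, rfl⟩]
  exact Finset.card_le_univ _

theorem periodic_three [Fintype α] (hα : Fintype.card α = 3) (hc : IsCycleSquareColoring c) :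
    Function.Periodic c 3 := fun v => by
  have h₁ := hc (v + 1)
  have h₂ := hc (v + 2)
  rw [add_assoc, add_assoc] at h₁
  rw [add_assoc] at h₂
  exact eq_of_ne_of_ne_of_card_eq_three hα h₁.1 h₁.2.symm h₂.1.symm (hc v).1 (hc v).2

theorem three_dvd [Fintype α] (hα : Fintype.card α = 3) (hc : IsCycleSquareColoring c) :
    3 ∣ n + 3 := by
  open Fin.NatCast in
  let f : ℕ → α := fun a => c a
  have hf : Function.Periodic f 3 := fun a => by
    simp only [f]; push_cast; exact hc.periodic_three hα a
  have hwrap : f ((n + 3) % 3) = c 0 := by rw [hf.map_mod_nat]; simp [f]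
  by_contra h3
  rcases (by omega : (n + 3) % 3 = 1 ∨ (n + 3) % 3 = 2) with h | h <;>
    rw [h] at hwrap <;> simp [f] at hwrap
  exacts [(hc 0).1 hwrap.symm, (hc 0).2 hwrap.symm]

theorem injective {c : Fin (2 + 3) → α} (hc : IsCycleSquareColoring c) : Function.Injective c := by
  have hnear : ∀ u v : Fin 5, u ≠ v → v = u + 1 ∨ v = u + 2 ∨ u = v + 1 ∨ u = v + 2 := by decide
  intro u v huv
  by_contra hne
  rcases hnear u v hne with rfl | rfl | rfl | rfl
  exacts [(hc u).1 huv, (hc u).2 huv, (hc v).1 huv.symm, (hc v).2 huv.symm]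

theorem of_injective (hc : Function.Injective c) : IsCycleSquareColoring c := fun v =>
  ⟨hc.ne (left_ne_add.2 (by simp)),
    hc.ne (left_ne_add.2 (fin_two_ne_zero n))⟩

theorem of_nat {f : ℕ → α}
    (hf : ∀ a < n + 3, f a ≠ f ((a + 1) % (n + 3)) ∧ f a ≠ f ((a + 2) % (n + 3))) :
    IsCycleSquareColoring (fun v : Fin (n + 3) => f v) := fun v => by
  simpa [Fin.val_add] using hf v v.isLt

end IsCycleSquareColoring

theorem pcfChromNum_cycleGraph_eq_succ_iff (n k : ℕ) :
    pcfChromNum (cycleGraph (n + 3)) = k + 1 ↔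
      (∃ c : Fin (n + 3) → Fin (k + 1), IsCycleSquareColoring c) ∧
        ¬∃ c : Fin (n + 3) → Fin k, IsCycleSquareColoring c := by
  simp only [pcfChromNum_eq_succ_iff, isPCFColoring_cycleGraph_iff]

theorem exists_isCycleSquareColoring_fin_three {n : ℕ} (h3 : 3 ∣ n + 3) :
    ∃ c : Fin (n + 3) → Fin 3, IsCycleSquareColoring c := by
  refine ⟨_, IsCycleSquareColoring.of_nat (f := fun a => ⟨a % 3, by omega⟩) fun a _ => ?_⟩
  simp only [ne_eq, Fin.mk.injEq, Nat.mod_mod_of_dvd _ h3]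
  omega

theorem exists_isCycleSquareColoring_fin_four {n p q : ℕ} (hpq : n + 3 = 3 * p + 4 * q) :
    ∃ c : Fin (n + 3) → Fin 4, IsCycleSquareColoring c := by
  refine ⟨_, IsCycleSquareColoring.of_nat
    (f := fun a => ⟨if a < 3 * p then a % 3 else (a - 3 * p) % 4, by split <;> omega⟩)
    fun a ha => ?_⟩
  simp only [ne_eq, Fin.mk.injEq, Nat.add_mod_eq_ite, Nat.mod_eq_of_lt ha,
    Nat.mod_eq_of_lt (show 1 < n + 3 by omega), Nat.mod_eq_of_lt (show 2 < n + 3 by omega)]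
  constructor <;> split_ifs <;> omega

theorem pcf_cycle (n : ℕ) (hn : 3 ≤ n) :
    pcfChromNum (SimpleGraph.cycleGraph n) =
      if 3 ∣ n then 3 else if n = 5 then 5 else 4 := by
  obtain ⟨n, rfl⟩ : ∃ k, n = k + 3 := ⟨n - 3, by omega⟩
  split_ifs with h3 h5
  · exact (pcfChromNum_cycleGraph_eq_succ_iff n 2).2
      ⟨exists_isCycleSquareColoring_fin_three h3, fun ⟨_, hc⟩ => by simpa using hc.three_le_card⟩
  · obtain rfl : n = 2 := by omega
    exact (pcfChromNum_cycleGraph_eq_succ_iff 2 4).2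
      ⟨⟨id, .of_injective Function.injective_id⟩,
        fun ⟨c, hc⟩ => by simpa using Fintype.card_le_of_injective c hc.injective⟩
  · obtain ⟨p, q, hpq⟩ : ∃ p q, n + 3 = 3 * p + 4 * q := by
      rcases (by omega : (n + 3) % 3 = 1 ∨ (n + 3) % 3 = 2) with h | h
      exacts [⟨(n - 1) / 3, 1, by omega⟩, ⟨(n - 5) / 3, 2, by omega⟩]
    exact (pcfChromNum_cycleGraph_eq_succ_iff n 3).2
      ⟨exists_isCycleSquareColoring_fin_four hpq,
        fun ⟨_, hc⟩ => h3 (hc.three_dvd (Fintype.card_fin 3))⟩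
end

section
/- For every d ≥ 2, the proper conflict-free chromatic number of the d-dimensional hypercube Q_d equals 4. -/
open SimpleGraph

/-- The `d`-dimensional hypercube graph. -/
def hypercube (d : ℕ) : SimpleGraph (Fin d → Bool) :=
  SimpleGraph.fromRel (fun x y => ∃! i : Fin d, x i ≠ y i)

namespace PCFproof

/-- Flip coordinate `i`. -/
def flp {d : ℕ} (x : Fin d → Bool) (i : Fin d) : Fin d → Bool :=
  Function.update x i (!(x i))

lemma flp_apply {d : ℕ} (x : Fin d → Bool) (i j : Fin d) :
    flp x i j = if j = i then !(x i) else x j := Function.update_apply x i (!(x i)) j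

lemma flp_self {d : ℕ} (x : Fin d → Bool) (i : Fin d) : flp x i i = !(x i) := by
  simp [flp_apply]

lemma flp_other {d : ℕ} (x : Fin d → Bool) {i j : Fin d} (h : j ≠ i) : flp x i j = x j := by
  simp [flp_apply, h]

lemma flp_flp {d : ℕ} (x : Fin d → Bool) (i : Fin d) : flp (flp x i) i = x := by
  funext j
  by_cases h : j = i <;> simp [flp_apply, h]

lemma flp_comm {d : ℕ} (x : Fin d → Bool) {i m : Fin d} (h : i ≠ m) :
    flp (flp x i) m = flp (flp x m) i := by
  funext j
  rcases eq_or_ne j i with rfl | hji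
  · simp [flp_apply, h, h.symm]
  · rcases eq_or_ne j m with rfl | hjm
    · simp [flp_apply, h, h.symm, Ne.symm h]
    · simp [flp_apply, hji, hjm]

lemma flp_ne_index {d : ℕ} (x : Fin d → Bool) {i j : Fin d} (h : i ≠ j) :
    flp x i ≠ flp x j := by
  intro he
  have h1 := congrFun he i
  rw [flp_self, flp_other x h] at h1
  simp at h1

lemma adj_iff {d : ℕ} {x y : Fin d → Bool} :
    (hypercube d).Adj x y ↔ ∃ i, y = flp x i := by
  rw [hypercube, fromRel_adj]
  constructor
  · rintro ⟨hne, h | h⟩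
    · obtain ⟨i, hi, hu⟩ := h
      refine ⟨i, funext fun j => ?_⟩
      rcases eq_or_ne j i with rfl | hji
      · rw [flp_self]; revert hi; cases x j <;> cases y j <;> simp
      · rw [flp_other x hji]
        by_contra hc
        exact hji (hu j (Ne.symm hc))
    · obtain ⟨i, hi, hu⟩ := h
      refine ⟨i, funext fun j => ?_⟩
      rcases eq_or_ne j i with rfl | hji
      · rw [flp_self]; revert hi; cases x j <;> cases y j <;> simp
      · rw [flp_other x hji]
        by_contra hc
        exact hji (hu j hc)
  · rintro ⟨i, rfl⟩
    refine ⟨?_, Or.inl ⟨i, ?_, ?_⟩⟩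
    · intro he
      have := congrFun he i
      rw [flp_self] at this
      simp at this
    · show x i ≠ flp x i i
      rw [flp_self]; cases x i <;> simp
    · intro j hj
      by_contra hji
      rw [flp_other x hji] at hj
      exact hj rfl

/-- Parity of the weight, in `ZMod 2`. -/
def par {d : ℕ} (x : Fin d → Bool) : ZMod 2 := ∑ i, if x i then 1 else 0

lemma par_flp {d : ℕ} (x : Fin d → Bool) (i : Fin d) : par (flp x i) = par x + 1 := by
  classical
  have h0 : par (flp x i) = (if flp x i i then (1 : ZMod 2) else 0)
      + ∑ j ∈ Finset.univ.erase i, (if flp x i j then (1 : ZMod 2) else 0) :=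
    (Finset.add_sum_erase Finset.univ
      (fun j => if flp x i j then (1 : ZMod 2) else 0) (Finset.mem_univ i)).symm
  have h1 : par x = (if x i then (1 : ZMod 2) else 0)
      + ∑ j ∈ Finset.univ.erase i, (if x j then (1 : ZMod 2) else 0) :=
    (Finset.add_sum_erase Finset.univ
      (fun j => if x j then (1 : ZMod 2) else 0) (Finset.mem_univ i)).symm
  have h2 : ∑ j ∈ Finset.univ.erase i, (if flp x i j then (1 : ZMod 2) else 0)
      = ∑ j ∈ Finset.univ.erase i, (if x j then (1 : ZMod 2) else 0) :=
    Finset.sum_congr rfl fun j hj => by rw [flp_other x (Finset.ne_of_mem_erase hj)]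
  have h3 : (if flp x i i then (1 : ZMod 2) else 0)
      = (if x i then (1 : ZMod 2) else 0) + 1 := by
    rw [flp_self]; cases x i <;> simp <;> decide
  rw [h0, h1, h2, h3]
  ring

def toFin4 : ZMod 2 × Bool → Fin 4 :=
  fun p => (if p.1 = 0 then 0 else 2) + (if p.2 then 1 else 0)

lemma toFin4_inj : Function.Injective toFin4 := by decide

lemma fin3_eq : ∀ a b e f : Fin 3, a ≠ b → e ≠ a → e ≠ b → f ≠ a → f ≠ b → e = f := by
  decide

lemma pcf_map {V : Type*} {G : SimpleGraph V} {α : Type*} {n : ℕ} {f : α → Fin n}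
    (hf : Function.Injective f) {c : V → α}
    (h1 : ∀ u v, G.Adj u v → c u ≠ c v)
    (h2 : ∀ v, (G.neighborSet v).Nonempty → ∃ k, ∃! u, u ∈ G.neighborSet v ∧ c u = k) :
    IsPCFColoring G (fun v => f (c v)) := by
  constructor
  · exact fun u v h he => h1 u v h (hf he)
  · intro v hv
    obtain ⟨k, u, ⟨hm, hc⟩, hu⟩ := h2 v hv
    exact ⟨f k, u, ⟨hm, by show f (c u) = f k; rw [hc]⟩, fun w hw => hu w ⟨hw.1, hf hw.2⟩⟩

lemma no_fin3 {d : ℕ} (hd : 2 ≤ d) (c : (Fin d → Bool) → Fin 3)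
    (hc : IsPCFColoring (hypercube d) c) : False := by
  obtain ⟨hp, hcf⟩ := hc
  have h0 : (0 : ℕ) < d := by omega
  have h1 : (1 : ℕ) < d := by omega
  set i0 : Fin d := ⟨0, h0⟩ with hi0
  set i1 : Fin d := ⟨1, h1⟩ with hi1
  have hi01 : i0 ≠ i1 := by simp [hi0, hi1, Fin.ext_iff]
  set v : Fin d → Bool := fun _ => false with hv
  have hvadj : ∀ i, (hypercube d).Adj v (flp v i) := fun i => adj_iff.2 ⟨i, rfl⟩
  have hvne : ((hypercube d).neighborSet v).Nonempty := ⟨flp v i0, hvadj i0⟩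
  obtain ⟨k, u, ⟨hum, huc⟩, huu⟩ := hcf v hvne
  obtain ⟨i, rfl⟩ := adj_iff.1 ((SimpleGraph.mem_neighborSet _ _ _).1 hum)
  have hside : ∀ j, j ≠ i → c (flp v j) ≠ k ∧ c (flp v j) ≠ c v := by
    intro j hj
    constructor
    · intro he
      exact flp_ne_index v hj (huu (flp v j) ⟨(SimpleGraph.mem_neighborSet _ _ _).2 (hvadj j), he⟩)
    · intro he
      exact hp v (flp v j) (hvadj j) he.symm
  have hkv : k ≠ c v := by
    intro he
    exact hp v (flp v i) (hvadj i) (by rw [huc, he])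
  have key : ∀ m, c (flp (flp v i) m) = c v := by
    intro m
    rcases eq_or_ne m i with rfl | hm
    · rw [flp_flp]
    · have hx := hside m hm
      have hadj1 : (hypercube d).Adj (flp v i) (flp (flp v i) m) := adj_iff.2 ⟨m, rfl⟩
      have hadj2 : (hypercube d).Adj (flp v m) (flp (flp v i) m) := by
        rw [flp_comm v (fun he => hm he.symm)]
        exact adj_iff.2 ⟨i, rfl⟩
      refine fin3_eq k (c (flp v m)) (c (flp (flp v i) m)) (c v)
        (fun he => hx.1 he.symm) ?_ ?_ (fun he => hkv he.symm) (fun he => hx.2 he.symm)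
      · intro he
        exact hp _ _ hadj1 (by rw [huc, he])
      · intro he
        exact hp _ _ hadj2 he.symm
  have huadj : ∀ m, (hypercube d).Adj (flp v i) (flp (flp v i) m) :=
    fun m => adj_iff.2 ⟨m, rfl⟩
  have hune : ((hypercube d).neighborSet (flp v i)).Nonempty := ⟨_, huadj i0⟩
  obtain ⟨k', w, ⟨hwm, hwc⟩, hwu⟩ := hcf (flp v i) hune
  obtain ⟨m, rfl⟩ := adj_iff.1 ((SimpleGraph.mem_neighborSet _ _ _).1 hwm)
  have hk' : k' = c v := by rw [← hwc, key]
  have e0 := hwu (flp (flp v i) i0)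
    ⟨(SimpleGraph.mem_neighborSet _ _ _).2 (huadj i0), by rw [key, hk']⟩
  have e1 := hwu (flp (flp v i) i1)
    ⟨(SimpleGraph.mem_neighborSet _ _ _).2 (huadj i1), by rw [key, hk']⟩
  exact flp_ne_index (flp v i) hi01 (e0.trans e1.symm)

lemma upper {d : ℕ} (hd : 2 ≤ d) :
    ∃ c : (Fin d → Bool) → Fin 4, IsPCFColoring (hypercube d) c := by
  have h0 : (0 : ℕ) < d := by omega
  set i0 : Fin d := ⟨0, h0⟩ with hi0
  refine ⟨fun x => toFin4 (par x, x i0), pcf_map toFin4_inj ?_ ?_⟩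
  · intro u w hadj
    obtain ⟨i, rfl⟩ := adj_iff.1 hadj
    intro he
    have h1 : par u = par (flp u i) := congrArg Prod.fst he
    rw [par_flp] at h1
    exact (by decide : ∀ a : ZMod 2, a ≠ a + 1) _ h1
  · intro x _
    refine ⟨(par x + 1, !(x i0)), flp x i0,
      ⟨(SimpleGraph.mem_neighborSet _ _ _).2 (adj_iff.2 ⟨i0, rfl⟩), ?_⟩, ?_⟩
    · rw [Prod.ext_iff]
      exact ⟨par_flp x i0, by rw [flp_self]⟩
    · rintro w ⟨hwm, hwc⟩
      obtain ⟨i, rfl⟩ := adj_iff.1 ((SimpleGraph.mem_neighborSet _ _ _).1 hwm)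
      rcases eq_or_ne i i0 with rfl | h
      · rfl
      · exfalso
        have h2 : flp x i i0 = !(x i0) := congrArg Prod.snd hwc
        rw [flp_other x (fun he => h he.symm)] at h2
        simp at h2

end PCFproof

theorem pcf_hypercube (d : ℕ) (hd : 2 ≤ d) : pcfChromNum (hypercube d) = 4 := by
  have h4 : 4 ∈ {n | ∃ c : (Fin d → Bool) → Fin n, IsPCFColoring (hypercube d) c} :=
    PCFproof.upper hd
  have hlb : ∀ n ∈ {n | ∃ c : (Fin d → Bool) → Fin n, IsPCFColoring (hypercube d) c},
      4 ≤ n := by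
    rintro n ⟨c, hc⟩
    by_contra h
    push_neg at h
    have h3 : n ≤ 3 := by omega
    exact PCFproof.no_fin3 hd (fun v => Fin.castLE h3 (c v))
      (PCFproof.pcf_map (Fin.castLE_injective h3) hc.1 hc.2)
  exact le_antisymm (Nat.sInf_le h4) (le_csInf ⟨4, h4⟩ hlb)
end

section
/- Let H be the corona of a connected graph G (obtained by attaching one pendant vertex to each vertex of G). Then χ(G) ≤ χ_pcf(H) ≤ χ(G) + 1. -/
open SimpleGraph

/-- The corona of a graph: attach one pendant vertex to each vertex. -/
def corona {V : Type*} (G : SimpleGraph V) : SimpleGraph (V ⊕ V) :=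
  SimpleGraph.fromRel (fun a b => match a, b with
    | Sum.inl u, Sum.inl v => G.Adj u v
    | Sum.inl u, Sum.inr v => u = v
    | _, _ => False)

/-! The corona contains `G` on the left copy, so a PCF coloring of it restricts to a proper
coloring of `G`. Conversely, a proper `m`-coloring of `G` together with one fresh color on all
pendant vertices is PCF: a pendant vertex sees only its anchor, and an original vertex sees the
fresh color exactly once, on its own pendant vertex. -/

-- If `S = ∅` then also `T = ∅`, and both infima are the junk value `sInf ∅ = 0`.
theorem Nat.sInf_le_sInf_and_sInf_le_sInf_add_one {S T : Set ℕ} (hTS : T ⊆ S)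
    (hST : ∀ n ∈ S, n + 1 ∈ T) : sInf S ≤ sInf T ∧ sInf T ≤ sInf S + 1 := by
  rcases S.eq_empty_or_nonempty with rfl | hS
  · simp [Set.subset_empty_iff.mp hTS]
  have hT : T.Nonempty := ⟨_, hST _ (Nat.sInf_mem hS)⟩
  exact ⟨Nat.sInf_le (hTS (Nat.sInf_mem hT)), Nat.sInf_le (hST _ (Nat.sInf_mem hS))⟩

section Corona

variable {V : Type*} {G : SimpleGraph V}

@[simp]
theorem corona_adj_inl_inl {u v : V} : (corona G).Adj (.inl u) (.inl v) ↔ G.Adj u v := by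
  simp only [corona, fromRel_adj, ne_eq, Sum.inl.injEq]
  exact ⟨fun ⟨_, h⟩ => h.elim id G.adj_symm, fun h => ⟨h.ne, .inl h⟩⟩

@[simp]
theorem corona_adj_inl_inr {u v : V} : (corona G).Adj (.inl u) (.inr v) ↔ u = v := by
  simp [corona]

@[simp]
theorem corona_adj_inr_inl {u v : V} : (corona G).Adj (.inr u) (.inl v) ↔ v = u := by
  simp [corona]

@[simp]
theorem corona_not_adj_inr_inr {u v : V} : ¬(corona G).Adj (.inr u) (.inr v) := by
  simp [corona]

def coronaInlHom (G : SimpleGraph V) : G →g corona G where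
  toFun := Sum.inl
  map_rel' := corona_adj_inl_inl.mpr

end Corona

theorem colorable_of_isPCFColoring_corona {V : Type*} {G : SimpleGraph V} {n : ℕ}
    {c : V ⊕ V → Fin n} (hc : IsPCFColoring (corona G) c) : G.Colorable n :=
  ⟨(Coloring.mk c fun h => hc.1 _ _ h).comp (coronaInlHom G)⟩

theorem isPCFColoring_corona_of_coloring {V : Type*} {G : SimpleGraph V} {m : ℕ}
    (c : G.Coloring (Fin m)) :
    IsPCFColoring (corona G) (Sum.elim (fun v => (c v).castSucc) fun _ => Fin.last m) := by
  have hlast (v : V) : (c v).castSucc ≠ Fin.last m := (Fin.castSucc_lt_last _).ne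
  refine ⟨?_, ?_⟩
  · rintro (u | u) (v | v) h
    · exact fun he => c.valid (corona_adj_inl_inl.mp h) (Fin.castSucc_injective _ he)
    · exact hlast u
    · exact (hlast v).symm
    · exact (corona_not_adj_inr_inr h).elim
  · rintro (v | v) -
    · refine ⟨Fin.last m, .inr v, ⟨by simp, rfl⟩, ?_⟩
      rintro (w | w) ⟨hw, hcw⟩
      · exact (hlast w hcw).elim
      · simpa [eq_comm] using hw
    · refine ⟨(c v).castSucc, .inl v, ⟨by simp, rfl⟩, ?_⟩
      rintro (w | w) ⟨hw, -⟩
      · simpa using hw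
      · exact (corona_not_adj_inr_inr (G := G) hw).elim

theorem pcf_corona_bounds_general {V : Type*} (G : SimpleGraph V) :
    chromNum G ≤ pcfChromNum (corona G) ∧ pcfChromNum (corona G) ≤ chromNum G + 1 :=
  Nat.sInf_le_sInf_and_sInf_le_sInf_add_one
    (fun _ ⟨_, hc⟩ => colorable_of_isPCFColoring_corona hc)
    (fun _ ⟨c⟩ => ⟨_, isPCFColoring_corona_of_coloring c⟩)

theorem pcf_corona_bounds {V : Type*} [Fintype V] (G : SimpleGraph V) (hG : G.Connected) :
    chromNum G ≤ pcfChromNum (corona G) ∧ pcfChromNum (corona G) ≤ chromNum G + 1 :=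
  pcf_corona_bounds_general G
end

section
/- Let G be a connected bipartite graph with at least one edge and let H be its corona. Then χ_pcf(H) = χ(G) + 1 = 3. -/
open SimpleGraph

lemma corona_adj {V : Type*} (G : SimpleGraph V) (a b : V ⊕ V) :
    (corona G).Adj a b ↔ a ≠ b ∧ ((match a, b with
    | Sum.inl u, Sum.inl v => G.Adj u v
    | Sum.inl u, Sum.inr v => u = v
    | _, _ => False) ∨ (match b, a with
    | Sum.inl u, Sum.inl v => G.Adj u v
    | Sum.inl u, Sum.inr v => u = v
    | _, _ => False)) := by
  simp [corona, SimpleGraph.fromRel_adj]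

theorem pcf_corona_bipartite {V : Type*} [Fintype V] (G : SimpleGraph V)
    (hG : G.Connected) (hbip : G.Colorable 2) (hedge : G.edgeSet.Nonempty) :
    pcfChromNum (corona G) = chromNum G + 1 ∧ chromNum G + 1 = 3 := by
  obtain ⟨e, he⟩ := hedge
  induction e using Sym2.ind with
  | _ u v =>
  rw [SimpleGraph.mem_edgeSet] at he
  have hbip2 : (2:ℕ) ∈ {n | G.Colorable n} := Set.mem_setOf.mpr hbip
  obtain ⟨col⟩ := hbip
  -- chromNum G = 2
  have hchrom : chromNum G = 2 := by
    apply le_antisymm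
    · exact Nat.sInf_le hbip2
    · apply le_csInf ⟨2, hbip2⟩
      intro m hm
      by_contra hlt
      push_neg at hlt
      interval_cases m
      · obtain ⟨c⟩ := hm; exact (c u).elim0
      · obtain ⟨c⟩ := hm
        exact c.valid he (Subsingleton.elim _ _)
  -- pcfChromNum (corona G) = 3
  have hpcf : pcfChromNum (corona G) = 3 := by
    have h3 : (3 : ℕ) ∈ {n | ∃ c : V ⊕ V → Fin n, IsPCFColoring (corona G) c} := by
      refine ⟨Sum.elim (fun w => (col w).castSucc) (fun _ => 2), ?_, ?_⟩
      · intro a b hab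
        rw [corona_adj] at hab
        obtain ⟨hne, hr⟩ := hab
        match a, b with
        | Sum.inl x, Sum.inl y =>
          have hxy : G.Adj x y := by rcases hr with h | h; exact h; exact h.symm
          simp only [Sum.elim_inl]
          intro h
          exact col.valid hxy (Fin.castSucc_injective _ h)
        | Sum.inl x, Sum.inr y =>
          simp only [Sum.elim_inl, Sum.elim_inr]
          intro h
          have := congrArg Fin.val h
          have := (col x).isLt
          simp [Fin.castSucc, Fin.castAdd, Fin.castLE] at *
          omega
        | Sum.inr x, Sum.inl y =>
          simp only [Sum.elim_inl, Sum.elim_inr]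
          intro h
          have := congrArg Fin.val h
          have := (col y).isLt
          simp [Fin.castSucc, Fin.castAdd, Fin.castLE] at *
          omega
        | Sum.inr x, Sum.inr y =>
          exact absurd hr (by simp)
      · intro a _
        match a with
        | Sum.inl w =>
          refine ⟨2, Sum.inr w, ⟨?_, rfl⟩, ?_⟩
          · rw [SimpleGraph.mem_neighborSet, corona_adj]
            exact ⟨by simp, Or.inl rfl⟩
          · rintro b ⟨hb, hcb⟩
            rw [SimpleGraph.mem_neighborSet, corona_adj] at hb
            match b with
            | Sum.inl y =>
              exfalso
              have := congrArg Fin.val hcb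
              have := (col y).isLt
              simp [Fin.castSucc, Fin.castAdd, Fin.castLE] at *
              omega
            | Sum.inr y =>
              obtain ⟨_, h | h⟩ := hb
              · exact congrArg Sum.inr h.symm
              · exact absurd h (by simp)
        | Sum.inr w =>
          refine ⟨(col w).castSucc, Sum.inl w, ⟨?_, rfl⟩, ?_⟩
          · rw [SimpleGraph.mem_neighborSet, corona_adj]
            exact ⟨by simp, Or.inr rfl⟩
          · rintro b ⟨hb, hcb⟩
            rw [SimpleGraph.mem_neighborSet, corona_adj] at hb
            match b with
            | Sum.inl y =>
              obtain ⟨_, h | h⟩ := hb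
              · exact absurd h (by simp)
              · exact congrArg Sum.inl h
            | Sum.inr y =>
              exfalso
              obtain ⟨_, h | h⟩ := hb <;> simp at h
    apply le_antisymm
    · exact Nat.sInf_le h3
    · apply le_csInf ⟨3, h3⟩
      intro m hm
      by_contra hlt
      push_neg at hlt
      obtain ⟨c, hcp, hcf⟩ := hm
      interval_cases m
      · exact (c (Sum.inl u)).elim0
      · exact hcp (Sum.inl u) (Sum.inr u)
          (by rw [corona_adj]; exact ⟨by simp, Or.inl rfl⟩) (Subsingleton.elim _ _)
      · -- two colors impossible
        have hadj1 : (corona G).Adj (Sum.inl u) (Sum.inl v) := by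
          rw [corona_adj]
          refine ⟨?_, Or.inl he⟩
          intro h; rw [Sum.inl.injEq] at h; exact G.ne_of_adj he h
        have hadj2 : (corona G).Adj (Sum.inl u) (Sum.inr u) := by
          rw [corona_adj]; exact ⟨by simp, Or.inl rfl⟩
        obtain ⟨k, w₀, ⟨hw₀, hcw₀⟩, huniq⟩ := hcf (Sum.inl u) ⟨Sum.inr u, hadj2⟩
        rw [SimpleGraph.mem_neighborSet] at hw₀
        have h1 : c (Sum.inl v) ≠ c (Sum.inl u) := fun h => hcp _ _ hadj1 h.symm
        have h2 : c (Sum.inr u) ≠ c (Sum.inl u) := fun h => hcp _ _ hadj2 h.symm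
        have h0 : c w₀ ≠ c (Sum.inl u) := fun h => hcp _ _ hw₀ h.symm
        have hk1 : c (Sum.inl v) = k := by
          rw [← hcw₀]
          have a1 := (c (Sum.inl v)).isLt; have a2 := (c w₀).isLt
          have a3 := (c (Sum.inl u)).isLt
          have b1 : (c (Sum.inl v)).val ≠ (c (Sum.inl u)).val := fun h => h1 (Fin.ext h)
          have b2 : (c w₀).val ≠ (c (Sum.inl u)).val := fun h => h0 (Fin.ext h)
          exact Fin.ext (by omega)
        have hk2 : c (Sum.inr u) = k := by
          rw [← hcw₀]
          have a1 := (c (Sum.inr u)).isLt; have a2 := (c w₀).isLt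
          have a3 := (c (Sum.inl u)).isLt
          have b1 : (c (Sum.inr u)).val ≠ (c (Sum.inl u)).val := fun h => h2 (Fin.ext h)
          have b2 : (c w₀).val ≠ (c (Sum.inl u)).val := fun h => h0 (Fin.ext h)
          exact Fin.ext (by omega)
        have e1 : Sum.inl v = w₀ := huniq _ ⟨hadj1, hk1⟩
        have e2 : Sum.inr u = w₀ := huniq _ ⟨hadj2, hk2⟩
        simp [← e1] at e2
  exact ⟨by rw [hpcf, hchrom], by rw [hchrom]⟩
end

section
/- Let G be a connected graph with total domination number γ_t(G). Then χ_pcf(G) ≤ γ_t(G) + χ(G). -/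
open SimpleGraph

/-- The total domination number of a graph. -/
noncomputable def totalDomNum {V : Type*} [Fintype V] (G : SimpleGraph V) : ℕ :=
  sInf {n | ∃ D : Finset V, D.card = n ∧ ∀ v : V, ∃ u ∈ D, G.Adj v u}

theorem pcf_le_totalDom_add_chrom {V : Type*} [Fintype V] (G : SimpleGraph V)
    (hG : G.Connected) : pcfChromNum G ≤ totalDomNum G + chromNum G := by
  classical
  have hV : Nonempty V := hG.nonempty
  have hcne : {n | G.Colorable n}.Nonempty := ⟨Fintype.card V, G.colorable_of_fintype⟩
  have hcol : G.Colorable (chromNum G) := Nat.sInf_mem hcne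
  obtain ⟨C⟩ := hcol
  set t := totalDomNum G with ht
  set k := chromNum G with hk
  by_cases hS : {n | ∃ D : Finset V, D.card = n ∧ ∀ v : V, ∃ u ∈ D, G.Adj v u}.Nonempty
  · obtain ⟨D, hDcard, hDdom⟩ := Nat.sInf_mem hS
    have hDcard' : D.card = t := hDcard
    let f : V → Fin (t + k) := fun v =>
      if h : v ∈ D then Fin.castAdd k (Fin.cast hDcard' (D.equivFin ⟨v, h⟩))
      else Fin.natAdd t (C v)
    have hfD : ∀ v (h : v ∈ D), (f v).val < t := by
      intro v h
      simp only [f, dif_pos h]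
      exact (Fin.cast hDcard' (D.equivFin ⟨v, h⟩)).isLt
    have hfnD : ∀ v, v ∉ D → t ≤ (f v).val := by
      intro v h
      simp only [f, dif_neg h]
      exact Nat.le_add_right t _
    have hproper : ∀ u v, G.Adj u v → f u ≠ f v := by
      intro u v hadj heq
      by_cases hu : u ∈ D <;> by_cases hv : v ∈ D
      · have : (⟨u, hu⟩ : ↥D) = ⟨v, hv⟩ := by
          apply D.equivFin.injective
          have := heq
          simp only [f, dif_pos hu, dif_pos hv] at this
          have h2 := congrArg Fin.val this
          simp at h2
          exact Fin.ext h2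
        exact hadj.ne (congrArg Subtype.val this)
      · have h1 := hfD u hu
        have h2 := hfnD v hv
        have h3 := congrArg Fin.val heq
        omega
      · have h1 := hfnD u hu
        have h2 := hfD v hv
        have h3 := congrArg Fin.val heq
        omega
      · have : C u ≠ C v := C.valid hadj
        apply this
        have := heq
        simp only [f, dif_neg hu, dif_neg hv] at this
        have h2 := congrArg Fin.val this
        simp at h2
        exact Fin.ext h2
    have hpcf : IsPCFColoring G f := by
      refine ⟨hproper, fun v _ => ?_⟩
      obtain ⟨u, huD, hadj⟩ := hDdom v
      refine ⟨f u, u, ⟨hadj, rfl⟩, ?_⟩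
      rintro w ⟨hw, hcw⟩
      have hwD : w ∈ D := by
        by_contra hwn
        have h1 := hfnD w hwn
        have h2 := hfD u huD
        have h3 := congrArg Fin.val hcw
        omega
      have : (⟨w, hwD⟩ : ↥D) = ⟨u, huD⟩ := by
        apply D.equivFin.injective
        have := hcw
        simp only [f, dif_pos hwD, dif_pos huD] at this
        have h2 := congrArg Fin.val this
        simp at h2
        exact Fin.ext h2
      exact congrArg Subtype.val this
    exact Nat.sInf_le ⟨f, hpcf⟩
  · -- no total dominating set exists: some vertex has no neighbor
    have ht0 : t = 0 := by
      rw [ht, totalDomNum, Set.not_nonempty_iff_eq_empty.mp hS, Nat.sInf_empty]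
    obtain ⟨v, hv⟩ : ∃ v : V, ∀ u, ¬ G.Adj v u := by
      by_contra h
      push_neg at h
      exact hS ⟨Finset.univ.card, Finset.univ, rfl, fun w => by
        obtain ⟨u, hu⟩ := h w; exact ⟨u, Finset.mem_univ u, hu⟩⟩
    have hnoadj : ∀ a b, ¬ G.Adj a b := by
      intro a b hab
      have : v = a := by
        obtain ⟨p⟩ := hG.preconnected v a
        cases p with
        | nil => rfl
        | cons h _ => exact absurd h (hv _)
      exact hv b (this ▸ hab)
    have hone : pcfChromNum G ≤ 1 := by
      apply Nat.sInf_le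
      refine ⟨fun _ => 0, fun a b hab => absurd hab (hnoadj a b), fun w hw => ?_⟩
      obtain ⟨u, hu⟩ := hw
      exact absurd hu (hnoadj w u)
    have hk1 : 1 ≤ k := by
      rcases Nat.eq_zero_or_pos k with h0 | h1
      · exfalso
        have : G.Colorable 0 := h0 ▸ Nat.sInf_mem hcne
        obtain ⟨c0⟩ := this
        exact (c0 (Classical.arbitrary V)).elim0
      · exact h1
    omega
end

section
/- If a connected graph G contains a universal vertex (a vertex adjacent to all other vertices), then χ_pcf(G) ≤ χ(G) + 2. -/
open SimpleGraph

/-!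
Take an optimal proper coloring and give the universal vertex `v` and one of its neighbours
`u` two fresh colors, each used nowhere else. Every vertex other than `v` then sees `v`'s color
exactly once, and `v` sees `u`'s color exactly once.
-/

namespace SimpleGraph

variable {V : Type*} {G : SimpleGraph V}

theorem colorable_chromNum [Fintype V] (G : SimpleGraph V) : G.Colorable (chromNum G) :=
  Nat.sInf_mem (s := {n | G.Colorable n}) ⟨Fintype.card V, G.colorable_of_fintype⟩

theorem isPCFColoring_of_forall_adj_unique_color {n : ℕ} {c : V → Fin n}
    (hproper : ∀ a b, G.Adj a b → c a ≠ c b)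
    (hunique : ∀ w, (G.neighborSet w).Nonempty → ∃ x, G.Adj w x ∧ ∀ y, c y = c x → y = x) :
    IsPCFColoring G c := by
  refine ⟨hproper, fun w hw => ?_⟩
  obtain ⟨x, hwx, hx⟩ := hunique w hw
  exact ⟨c x, x, ⟨hwx, rfl⟩, fun y hy => hx y hy.2⟩

open Classical in
noncomputable def Coloring.recolorPair {n : ℕ} (C : G.Coloring (Fin n)) (v u : V) :
    V → Fin (n + 2) :=
  fun w => if w = v then Fin.last (n + 1)
    else if w = u then (Fin.last n).castSucc else (C w).castSucc.castSucc

namespace Coloring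

variable {n : ℕ} (C : G.Coloring (Fin n)) {v u : V}

theorem eq_left_of_recolorPair_eq :
    ∀ y, C.recolorPair v u y = C.recolorPair v u v → y = v := by
  intro y hy
  by_contra hyv
  by_cases hyu : y = u
  · subst hyu; simp [recolorPair, hyv] at hy
  · simp [recolorPair, hyv, hyu, Fin.castSucc_ne_last] at hy

theorem eq_right_of_recolorPair_eq :
    ∀ y, C.recolorPair v u y = C.recolorPair v u u → y = u := by
  intro y hy
  by_cases huv : u = v
  · subst huv; exact C.eq_left_of_recolorPair_eq y hy
  by_contra hyu
  by_cases hyv : y = v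
  · subst hyv
    exact hyu (C.eq_left_of_recolorPair_eq u hy.symm).symm
  · simp [recolorPair, hyv, hyu, huv, Fin.castSucc_ne_last] at hy

theorem recolorPair_ne_of_adj :
    ∀ a b, G.Adj a b → C.recolorPair v u a ≠ C.recolorPair v u b := by
  intro a b hab heq
  by_cases hav : a = v
  · subst hav; exact hab.ne (C.eq_left_of_recolorPair_eq b heq.symm).symm
  by_cases hau : a = u
  · subst hau; exact hab.ne (C.eq_right_of_recolorPair_eq b heq.symm).symm
  by_cases hbv : b = v
  · subst hbv; exact hab.ne (C.eq_left_of_recolorPair_eq a heq)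
  by_cases hbu : b = u
  · subst hbu; exact hab.ne (C.eq_right_of_recolorPair_eq a heq)
  simp only [recolorPair, hav, hau, hbv, hbu, if_false] at heq
  exact C.valid hab (Fin.castSucc_injective _ (Fin.castSucc_injective _ heq))

end Coloring

theorem exists_isPCFColoring_of_colorable_of_universal {n : ℕ} (hcol : G.Colorable n) {v : V}
    (hv : ∀ w, w ≠ v → G.Adj v w) : ∃ c : V → Fin (n + 2), IsPCFColoring G c := by
  obtain ⟨u, hu⟩ : ∃ u, (G.neighborSet v).Nonempty → G.Adj v u := by
    by_cases h : (G.neighborSet v).Nonempty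
    · exact ⟨h.some, fun _ => h.some_mem⟩
    · exact ⟨v, fun h' => absurd h' h⟩
  obtain ⟨C⟩ := hcol
  refine ⟨C.recolorPair v u,
    isPCFColoring_of_forall_adj_unique_color C.recolorPair_ne_of_adj fun w hw => ?_⟩
  by_cases hwv : w = v
  · exact ⟨u, hwv ▸ hu (hwv ▸ hw), C.eq_right_of_recolorPair_eq⟩
  · exact ⟨v, (hv w hwv).symm, C.eq_left_of_recolorPair_eq⟩

end SimpleGraph

theorem pcf_le_chrom_add_two_of_universal_general {V : Type*} [Fintype V] (G : SimpleGraph V)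
    (huniv : ∃ v : V, ∀ w : V, w ≠ v → G.Adj v w) :
    pcfChromNum G ≤ chromNum G + 2 := by
  obtain ⟨v, hv⟩ := huniv
  exact Nat.sInf_le (exists_isPCFColoring_of_colorable_of_universal G.colorable_chromNum hv)

theorem pcf_le_chrom_add_two_of_universal {V : Type*} [Fintype V] (G : SimpleGraph V)
    (hG : G.Connected) (huniv : ∃ v : V, ∀ w : V, w ≠ v → G.Adj v w) :
    pcfChromNum G ≤ chromNum G + 2 :=
  pcf_le_chrom_add_two_of_universal_general G huniv
end

section
/- Let G be a graph in which every two vertices of degree at least 3 are at distance at least 3 from each other. Then χ_pcf(G) ≤ 5. -/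
open SimpleGraph

section PCFAux
open Finset
open scoped Classical
variable {V : Type*} [Fintype V] (G : SimpleGraph V) [DecidableRel G.Adj]

def PCFBranch (v : V) : Prop := 3 ≤ G.degree v

noncomputable def pcfDesig (v : V) : V :=
  if h : (G.neighborFinset v).Nonempty then h.choose else v

lemma pcfDesig_adj {v : V} (h : 0 < G.degree v) : G.Adj v (pcfDesig G v) := by
  have hne : (G.neighborFinset v).Nonempty := Finset.card_pos.mp h
  rw [pcfDesig, dif_pos hne]
  exact (SimpleGraph.mem_neighborFinset G v _).mp hne.choose_spec

def PCFHAdj (u w : V) : Prop :=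
  u ≠ w ∧ (G.Adj u w ∨
    (∃ m, G.degree m = 2 ∧ G.Adj m u ∧ G.Adj m w) ∨
    (∃ b, PCFBranch G b ∧ G.Adj b u ∧ G.Adj b w ∧ (u = pcfDesig G b ∨ w = pcfDesig G b)))

lemma PCFHAdj.symm {u w : V} (h : PCFHAdj G u w) : PCFHAdj G w u := by
  obtain ⟨hne, h⟩ := h
  refine ⟨hne.symm, ?_⟩
  rcases h with h | ⟨m, h1, h2, h3⟩ | ⟨b, h1, h2, h3, h4⟩
  · exact Or.inl h.symm
  · exact Or.inr (Or.inl ⟨m, h1, h3, h2⟩)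
  · exact Or.inr (Or.inr ⟨b, h1, h3, h2, h4.symm⟩)

noncomputable def pcfRank (v : V) : ℕ :=
  if PCFBranch G v then 0 else if ∃ b, PCFBranch G b ∧ v = pcfDesig G b then 1 else 2

noncomputable def pcfKey (v : V) : ℕ :=
  pcfRank G v * Fintype.card V + (Fintype.equivFin V v : ℕ)

lemma pcfKey_lt_of_rank_lt {u v : V} (h : pcfRank G u < pcfRank G v) :
    pcfKey G u < pcfKey G v := by
  have hN : (Fintype.equivFin V u : ℕ) < Fintype.card V := (Fintype.equivFin V u).isLt
  calc pcfKey G u < (pcfRank G u + 1) * Fintype.card V := by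
        rw [pcfKey, Nat.succ_mul]; omega
    _ ≤ pcfRank G v * Fintype.card V := Nat.mul_le_mul_right _ h
    _ ≤ pcfKey G v := Nat.le_add_right _ _

lemma pcfRank_le_of_key_lt {u v : V} (h : pcfKey G u < pcfKey G v) :
    pcfRank G u ≤ pcfRank G v := by
  by_contra hc
  push_neg at hc
  have := pcfKey_lt_of_rank_lt G hc
  omega

lemma pcfKey_ne {u v : V} (h : u ≠ v) : pcfKey G u ≠ pcfKey G v := by
  intro he
  rcases Nat.lt_trichotomy (pcfRank G u) (pcfRank G v) with hr | hr | hr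
  · exact absurd he (Nat.ne_of_lt (pcfKey_lt_of_rank_lt G hr))
  · rw [pcfKey, pcfKey, hr] at he
    have : (Fintype.equivFin V u : ℕ) = (Fintype.equivFin V v : ℕ) := by omega
    exact h ((Fintype.equivFin V).injective (Fin.ext this))
  · exact absurd he.symm (Nat.ne_of_lt (pcfKey_lt_of_rank_lt G hr))

noncomputable def pcfBackSet (v : V) : Finset V :=
  Finset.univ.filter fun u => PCFHAdj G u v ∧ pcfKey G u < pcfKey G v

lemma mem_pcfBackSet {u v : V} :
    u ∈ pcfBackSet G v ↔ PCFHAdj G u v ∧ pcfKey G u < pcfKey G v := by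
  simp [pcfBackSet]

noncomputable def pcfPick (S : Finset (Fin 5)) : Fin 5 :=
  if h : ∃ k : Fin 5, k ∉ S then h.choose else 0

lemma pcfPick_not_mem {S : Finset (Fin 5)} (hS : S.card < 5) : pcfPick S ∉ S := by
  have h : ∃ k : Fin 5, k ∉ S := by
    by_contra hc
    push_neg at hc
    have hsub : (Finset.univ : Finset (Fin 5)) ⊆ S := fun k _ => hc k
    have := Finset.card_le_card hsub
    simp at this
    omega
  rw [pcfPick, dif_pos h]
  exact h.choose_spec

noncomputable def pcfCol (v : V) : Fin 5 :=
  pcfPick ((pcfBackSet G v).attach.image fun u => pcfCol u.1)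
termination_by pcfKey G v
decreasing_by exact ((mem_pcfBackSet G).mp u.2).2

lemma pcfCol_ne_back {u v : V} (hcard : (pcfBackSet G v).card ≤ 4)
    (hu : u ∈ pcfBackSet G v) : pcfCol G v ≠ pcfCol G u := by
  have h1 : pcfCol G u ∈ (pcfBackSet G v).attach.image fun u => pcfCol G u.1 :=
    Finset.mem_image.mpr ⟨⟨u, hu⟩, Finset.mem_attach _ _, rfl⟩
  have h2 : ((pcfBackSet G v).attach.image fun u => pcfCol G u.1).card < 5 := by
    have := Finset.card_image_le (s := (pcfBackSet G v).attach)
      (f := fun u => pcfCol G u.1)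
    rw [Finset.card_attach] at this
    omega
  rw [pcfCol]
  exact fun h => pcfPick_not_mem h2 (h ▸ h1)

lemma pcf_no_adj_branch (hfar : ∀ u v : V, u ≠ v → 3 ≤ G.degree u → 3 ≤ G.degree v →
      ∀ p : G.Walk u v, 3 ≤ p.length) {u v : V} (hu : PCFBranch G u) (hv : PCFBranch G v)
    (h : G.Adj u v) : False := by
  have := hfar u v (G.ne_of_adj h) hu hv (SimpleGraph.Walk.cons h SimpleGraph.Walk.nil)
  simp at this

lemma pcf_no_common_nbr (hfar : ∀ u v : V, u ≠ v → 3 ≤ G.degree u → 3 ≤ G.degree v →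
      ∀ p : G.Walk u v, 3 ≤ p.length) {u v m : V} (hu : PCFBranch G u) (hv : PCFBranch G v)
    (hne : u ≠ v) (h1 : G.Adj m u) (h2 : G.Adj m v) : False := by
  have := hfar u v hne hu hv
    (SimpleGraph.Walk.cons h1.symm (SimpleGraph.Walk.cons h2 SimpleGraph.Walk.nil))
  simp at this

lemma pcf_other_nbr_unique {m v u u' : V} (hm : G.degree m = 2) (hv : G.Adj m v)
    (hu : G.Adj m u) (hu' : G.Adj m u') (h1 : u ≠ v) (h2 : u' ≠ v) : u = u' := by
  have hcard : (G.neighborFinset m).card = 2 := hm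
  have hvm : v ∈ G.neighborFinset m := (SimpleGraph.mem_neighborFinset G m v).mpr hv
  have he : ((G.neighborFinset m).erase v).card = 1 := by
    rw [Finset.card_erase_of_mem hvm, hcard]
  refine Finset.card_le_one.mp (le_of_eq he) u ?_ u' ?_
  · exact Finset.mem_erase.mpr ⟨h1, (SimpleGraph.mem_neighborFinset G m u).mpr hu⟩
  · exact Finset.mem_erase.mpr ⟨h2, (SimpleGraph.mem_neighborFinset G m u').mpr hu'⟩

/-- The injection witness map. -/
noncomputable def pcfF (v u : V) : V × Fin 2 :=
  if G.Adj v u then (u, 0)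
  else if h : ∃ m, G.degree m = 2 ∧ G.Adj m v ∧ G.Adj m u then (h.choose, 1)
  else if h : ∃ b, PCFBranch G b ∧ G.Adj b v ∧ G.Adj b u ∧
      (v = pcfDesig G b ∨ u = pcfDesig G b) then (h.choose, 1)
  else (v, 0)

lemma pcfBack_cases (hfar : ∀ u v : V, u ≠ v → 3 ≤ G.degree u → 3 ≤ G.degree v →
      ∀ p : G.Walk u v, 3 ≤ p.length) {v : V} (hv : ¬ PCFBranch G v) {u : V}
    (hu : u ∈ pcfBackSet G v) :
    (G.Adj v u ∧ pcfF G v u = (u, 0)) ∨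
    (∃ m, G.degree m = 2 ∧ G.Adj m v ∧ G.Adj m u ∧ pcfF G v u = (m, 1)) ∨
    (∃ b, PCFBranch G b ∧ G.Adj b v ∧ G.Adj b u ∧ u = pcfDesig G b ∧ pcfF G v u = (b, 1)) := by
  obtain ⟨⟨hne, hcl⟩, hk⟩ := (mem_pcfBackSet G).mp hu
  by_cases ha : G.Adj v u
  · exact Or.inl ⟨ha, by rw [pcfF, if_pos ha]⟩
  right
  by_cases h2 : ∃ m, G.degree m = 2 ∧ G.Adj m v ∧ G.Adj m u
  · obtain ⟨hm, hmv, hmu⟩ := h2.choose_spec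
    exact Or.inl ⟨h2.choose, hm, hmv, hmu, by rw [pcfF, if_neg ha, dif_pos h2]⟩
  right
  have h3 : ∃ b, PCFBranch G b ∧ G.Adj b v ∧ G.Adj b u ∧
      (v = pcfDesig G b ∨ u = pcfDesig G b) := by
    rcases hcl with h | ⟨m, hm, hmu, hmv⟩ | ⟨b, hb, hbu, hbv, hor⟩
    · exact absurd h.symm ha
    · exact absurd ⟨m, hm, hmv, hmu⟩ h2
    · exact ⟨b, hb, hbv, hbu, hor.symm⟩
  obtain ⟨hb, hbv, hbu, hor⟩ := h3.choose_spec
  have hfeq : pcfF G v u = (h3.choose, 1) := by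
    rw [pcfF, if_neg ha, dif_neg h2, dif_pos h3]
  rcases hor with hvd | hud
  · exfalso
    have hub : ¬ PCFBranch G u := fun h => pcf_no_adj_branch G hfar hb h hbu
    have hund : ¬ ∃ b', PCFBranch G b' ∧ u = pcfDesig G b' := by
      rintro ⟨b', hb', hud'⟩
      by_cases hbb : b' = h3.choose
      · rw [hbb] at hud'
        exact hne (hud'.trans hvd.symm)
      · have hadjb' : G.Adj b' u := hud' ▸ pcfDesig_adj G (by
          have : 3 ≤ G.degree b' := hb'
          omega)
        exact pcf_no_common_nbr G hfar hb hb' (Ne.symm hbb) hbu.symm hadjb'.symm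
    have hranku : pcfRank G u = 2 := by rw [pcfRank, if_neg hub, if_neg hund]
    have hrankv : pcfRank G v = 1 := by
      rw [pcfRank, if_neg hv, if_pos ⟨h3.choose, hb, hvd⟩]
    have := pcfRank_le_of_key_lt G hk
    omega
  · exact ⟨h3.choose, hb, hbv, hbu, hud, hfeq⟩

lemma pcfBackSet_card_le (hfar : ∀ u v : V, u ≠ v → 3 ≤ G.degree u → 3 ≤ G.degree v →
      ∀ p : G.Walk u v, 3 ≤ p.length) (v : V) : (pcfBackSet G v).card ≤ 4 := by
  by_cases hv : PCFBranch G v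
  · have hempty : pcfBackSet G v = ∅ := by
      ext u
      simp only [Finset.notMem_empty, iff_false]
      intro hu
      obtain ⟨⟨hne, hcl⟩, hk⟩ := (mem_pcfBackSet G).mp hu
      have hru : PCFBranch G u := by
        by_contra hc
        have h1 : pcfRank G u ≤ pcfRank G v := pcfRank_le_of_key_lt G hk
        have h2 : pcfRank G v = 0 := by rw [pcfRank, if_pos hv]
        have h3 : pcfRank G u ≠ 0 := by
          rw [pcfRank, if_neg hc]; split <;> simp
        omega
      rcases hcl with h | ⟨m, hm, hmu, hmv⟩ | ⟨b, hb, hbu, hbv, _⟩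
      · exact pcf_no_adj_branch G hfar hru hv h
      · exact pcf_no_common_nbr G hfar hru hv hne hmu hmv
      · exact pcf_no_common_nbr G hfar hru hv hne hbu hbv
    rw [hempty]
    simp
  · have hmaps : ∀ u ∈ pcfBackSet G v,
        pcfF G v u ∈ G.neighborFinset v ×ˢ (Finset.univ : Finset (Fin 2)) := by
      intro u hu
      rcases pcfBack_cases G hfar hv hu with ⟨ha, hf⟩ | ⟨m, hm, hmv, hmu, hf⟩ |
        ⟨b, hb, hbv, hbu, hud, hf⟩
      · rw [hf]
        exact Finset.mem_product.mpr ⟨(SimpleGraph.mem_neighborFinset G v u).mpr ha,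
          Finset.mem_univ _⟩
      · rw [hf]
        exact Finset.mem_product.mpr ⟨(SimpleGraph.mem_neighborFinset G v m).mpr hmv.symm,
          Finset.mem_univ _⟩
      · rw [hf]
        exact Finset.mem_product.mpr ⟨(SimpleGraph.mem_neighborFinset G v b).mpr hbv.symm,
          Finset.mem_univ _⟩
    have hinj : Set.InjOn (pcfF G v) ↑(pcfBackSet G v) := by
      intro u hu u' hu' heq
      have hu₀ := Finset.mem_coe.mp hu
      have hu'₀ := Finset.mem_coe.mp hu'
      have hnev : u ≠ v := ((mem_pcfBackSet G).mp hu₀).1.1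
      have hnev' : u' ≠ v := ((mem_pcfBackSet G).mp hu'₀).1.1
      rcases pcfBack_cases G hfar hv hu₀ with ⟨ha, hf⟩ | ⟨m, hm, hmv, hmu, hf⟩ |
        ⟨b, hb, hbv, hbu, hud, hf⟩ <;>
      rcases pcfBack_cases G hfar hv hu'₀ with ⟨ha', hf'⟩ | ⟨m', hm', hmv', hmu', hf'⟩ |
        ⟨b', hb', hbv', hbu', hud', hf'⟩ <;>
      rw [hf, hf', Prod.mk.injEq] at heq <;> obtain ⟨e1, e2⟩ := heq
      · exact e1
      · exact absurd e2 (by decide)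
      · exact absurd e2 (by decide)
      · exact absurd e2 (by decide)
      · subst e1
        exact pcf_other_nbr_unique G hm hmv hmu hmu' hnev hnev'
      · exfalso
        rw [e1] at hm
        have : 3 ≤ G.degree b' := hb'
        omega
      · exact absurd e2 (by decide)
      · exfalso
        rw [← e1] at hm'
        have : 3 ≤ G.degree b := hb
        omega
      · rw [hud, hud', e1]
    have hc := Finset.card_le_card_of_injOn _ hmaps hinj
    have hcard2 : (G.neighborFinset v ×ˢ (Finset.univ : Finset (Fin 2))).card
        = G.degree v * 2 := by
      rw [Finset.card_product]
      simp [SimpleGraph.card_neighborFinset_eq_degree]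
    have hdeg : G.degree v ≤ 2 := by
      by_contra h
      exact hv (by unfold PCFBranch; omega)
    omega

end PCFAux

section PCFMain
open Finset
open scoped Classical
variable {V : Type*} [Fintype V] (G : SimpleGraph V) [DecidableRel G.Adj]

lemma pcfCol_hadj_ne (hfar : ∀ u v : V, u ≠ v → 3 ≤ G.degree u → 3 ≤ G.degree v →
      ∀ p : G.Walk u v, 3 ≤ p.length) {u v : V} (h : PCFHAdj G u v) :
    pcfCol G u ≠ pcfCol G v := by
  rcases Nat.lt_or_ge (pcfKey G u) (pcfKey G v) with hk | hk
  · exact (pcfCol_ne_back G (pcfBackSet_card_le G hfar v)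
      ((mem_pcfBackSet G).mpr ⟨h, hk⟩)).symm
  · have hk' : pcfKey G v < pcfKey G u := lt_of_le_of_ne hk (pcfKey_ne G h.1).symm
    exact pcfCol_ne_back G (pcfBackSet_card_le G hfar u)
      ((mem_pcfBackSet G).mpr ⟨h.symm, hk'⟩)

end PCFMain

theorem pcf_le_five_of_far_branch_vertices {V : Type*} [Fintype V] (G : SimpleGraph V)
    [DecidableRel G.Adj]
    (hfar : ∀ u v : V, u ≠ v → 3 ≤ G.degree u → 3 ≤ G.degree v →
      ∀ p : G.Walk u v, 3 ≤ p.length) :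
    pcfChromNum G ≤ 5 := by
  classical
  have hc : IsPCFColoring G (pcfCol G) := by
    constructor
    · intro u v huv
      exact pcfCol_hadj_ne G hfar ⟨G.ne_of_adj huv, Or.inl huv⟩
    · intro v hv
      obtain ⟨w, hw⟩ := hv
      have hw' : G.Adj v w := hw
      have hdpos : 0 < G.degree v := (G.degree_pos_iff_exists_adj v).mpr ⟨w, hw'⟩
      rcases Nat.lt_or_ge (G.degree v) 3 with h3 | h3
      · rcases (by omega : G.degree v = 1 ∨ G.degree v = 2) with h1 | h2
        · obtain ⟨a, ha⟩ := Finset.card_eq_one.mp h1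
          have hav : G.Adj v a := (SimpleGraph.mem_neighborFinset G v a).mp
            (ha ▸ Finset.mem_singleton_self a)
          refine ⟨pcfCol G a, a, ⟨hav, rfl⟩, ?_⟩
          rintro y ⟨hy, -⟩
          have : y ∈ G.neighborFinset v := (SimpleGraph.mem_neighborFinset G v y).mpr hy
          rw [ha] at this
          exact Finset.mem_singleton.mp this
        · obtain ⟨a, b, hab, hset⟩ := Finset.card_eq_two.mp h2
          have hav : G.Adj v a := (SimpleGraph.mem_neighborFinset G v a).mp
            (by rw [hset]; simp)
          have hbv : G.Adj v b := (SimpleGraph.mem_neighborFinset G v b).mp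
            (by rw [hset]; simp)
          have hne : pcfCol G a ≠ pcfCol G b :=
            pcfCol_hadj_ne G hfar ⟨hab, Or.inr (Or.inl ⟨v, h2, hav, hbv⟩)⟩
          refine ⟨pcfCol G a, a, ⟨hav, rfl⟩, ?_⟩
          rintro y ⟨hy, hcy⟩
          have : y ∈ G.neighborFinset v := (SimpleGraph.mem_neighborFinset G v y).mpr hy
          rw [hset] at this
          rcases Finset.mem_insert.mp this with h | h
          · exact h
          · rw [Finset.mem_singleton.mp h] at hcy
            exact absurd hcy.symm hne
      · have hd : G.Adj v (pcfDesig G v) := pcfDesig_adj G (by omega)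
        refine ⟨pcfCol G (pcfDesig G v), pcfDesig G v, ⟨hd, rfl⟩, ?_⟩
        rintro y ⟨hy, hcy⟩
        by_contra hyd
        have hadj : PCFHAdj G y (pcfDesig G v) :=
          ⟨hyd, Or.inr (Or.inr ⟨v, h3, hy, hd, Or.inr rfl⟩)⟩
        exact pcfCol_hadj_ne G hfar hadj hcy
  exact Nat.sInf_le ⟨pcfCol G, hc⟩
end

section
/- Let G be a graph of girth at least 6 such that every two vertices of degree at least 3 are at distance at least 6 from each other. Then χ_pcf(G) ≤ 4. -/
open SimpleGraph

/-!
Induction on the number of vertices. A vertex of degree at most one is deleted and then colored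
avoiding the color of its neighbor `u` and a color occurring exactly once around `u`.
Otherwise every degree is at least two. Following degree-two vertices from a vertex of degree at
least three (or around a cycle if there is none) either reaches another vertex of degree at least
three, at distance at least 6, or closes a cycle, of length at least 6: either way we find a
thread `a₀ a₁ … a₆` whose inner vertices have degree two, possibly with `a₀ = a₆`. Delete
`a₁, …, a₅`, color the rest, and color the thread so that any three consecutive vertices get
distinct colors while `a₁` and `a₅` avoid a color occurring exactly once around `a₀`, resp.
`a₆`, in the smaller graph; four colors leave enough room for this.
-/

open Set

section Recoloring

variable {V : Type*} {G : SimpleGraph V} {n : ℕ} {S : Set V} {c₀ c : V → Fin n}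

lemma existsUnique_adj_of_induce_compl (hagree : ∀ v ∉ S, c v = c₀ v) {v : V} {k : Fin n}
    (hk : ∃! u : ↥Sᶜ, G.Adj v u ∧ c₀ u = k) (hS : ∀ u ∈ S, G.Adj v u → c u ≠ k) :
    ∃! u, u ∈ G.neighborSet v ∧ c u = k := by
  obtain ⟨u, ⟨hvu, hu⟩, huniq⟩ := hk
  refine ⟨u, ⟨hvu, (hagree u u.2).trans hu⟩, fun w ⟨hvw, hw⟩ => ?_⟩
  by_cases hwS : w ∈ S
  · exact absurd hw (hS w hwS hvw)
  · exact congrArg Subtype.val (huniq ⟨w, hwS⟩ ⟨hvw, (hagree w hwS).symm.trans hw⟩)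

theorem IsPCFColoring.of_induce_compl (hc₀ : IsPCFColoring (G.induce Sᶜ) (c₀ ∘ (↑)))
    (hagree : ∀ v ∉ S, c v = c₀ v) (hproper : ∀ u ∈ S, ∀ v, G.Adj u v → c u ≠ c v)
    (hS : ∀ v ∈ S, (G.neighborSet v).Nonempty → ∃ k, ∃! u, u ∈ G.neighborSet v ∧ c u = k)
    (hbdry : ∀ v ∉ S, ∀ u ∈ S, G.Adj v u → ∃ k, ∃! w, w ∈ G.neighborSet v ∧ c w = k) :
    IsPCFColoring G c := by
  refine ⟨fun u v huv => ?_, fun v hv => ?_⟩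
  · by_cases hu : u ∈ S
    · exact hproper u hu v huv
    by_cases hv : v ∈ S
    · exact (hproper v hv u huv.symm).symm
    rw [hagree u hu, hagree v hv]
    exact hc₀.1 ⟨u, hu⟩ ⟨v, hv⟩ huv
  by_cases hvS : v ∈ S
  · exact hS v hvS hv
  by_cases hbd : ∃ u ∈ S, G.Adj v u
  · obtain ⟨u, huS, hvu⟩ := hbd
    exact hbdry v hvS u huS hvu
  push Not at hbd
  obtain ⟨u, hvu⟩ := hv
  have huS : u ∉ S := fun huS => hbd u huS hvu
  obtain ⟨k, hk⟩ := hc₀.2 ⟨v, hvS⟩ ⟨⟨u, huS⟩, hvu⟩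
  exact ⟨k, existsUnique_adj_of_induce_compl hagree hk fun w hwS hvw => absurd hvw (hbd w hwS)⟩

lemma IsPCFColoring.exists_witness (hc₀ : IsPCFColoring (G.induce Sᶜ) (c₀ ∘ (↑)))
    (hn : 2 ≤ n) : ∃ κ : V → Fin n, ∀ v ∉ S,
      κ v ≠ c₀ v ∧ ((∃ u ∉ S, G.Adj v u) → ∃! u : ↥Sᶜ, G.Adj v u ∧ c₀ u = κ v) := by
  have : Nontrivial (Fin n) := Fin.nontrivial_iff_two_le.mpr hn
  have hwit : ∀ v, ∃ k : Fin n, v ∉ S →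
      k ≠ c₀ v ∧ ((∃ u ∉ S, G.Adj v u) → ∃! u : ↥Sᶜ, G.Adj v u ∧ c₀ u = k) := by
    intro v
    by_cases hv : v ∉ S
    · by_cases hnbr : ∃ u ∉ S, G.Adj v u
      · obtain ⟨u, huS, hvu⟩ := hnbr
        obtain ⟨k, hk⟩ := hc₀.2 ⟨v, hv⟩ ⟨⟨u, huS⟩, hvu⟩
        refine ⟨k, fun _ => ⟨?_, fun _ => hk⟩⟩
        obtain ⟨w, ⟨hvw, rfl⟩, -⟩ := hk
        exact (hc₀.1 ⟨v, hv⟩ w hvw).symm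
      · obtain ⟨k, hk⟩ := exists_ne (c₀ v)
        exact ⟨k, fun _ => ⟨hk, fun h => absurd h hnbr⟩⟩
    · exact ⟨c₀ v, fun h => absurd h hv⟩
  choose κ hκ using hwit
  exact ⟨κ, fun v hv => hκ v hv⟩

theorem exists_isPCFColoring_of_neighborSet_subsingleton {v : V}
    (hv : (G.neighborSet v).Subsingleton) (hn : 2 < n) {c₀ : V → Fin n}
    (hc₀ : IsPCFColoring (G.induce {v}ᶜ) (c₀ ∘ (↑))) : ∃ c : V → Fin n, IsPCFColoring G c := by
  classical
  obtain ⟨κ, hκ⟩ := hc₀.exists_witness hn.le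
  obtain ⟨α, hα⟩ : ∃ α : Fin n, ∀ u, G.Adj v u → α ≠ c₀ u ∧ α ≠ κ u := by
    by_cases h : ∃ u, G.Adj v u
    · obtain ⟨u, hvu⟩ := h
      obtain ⟨α, hα⟩ := Fin.exists_ne_and_ne_of_two_lt (c₀ u) (κ u) hn
      exact ⟨α, fun w hvw => hv hvw hvu ▸ hα⟩
    · push Not at h
      exact ⟨c₀ v, fun u hu => absurd hu (h u)⟩
  have hagree : ∀ w ∉ ({v} : Set V), Function.update c₀ v α w = c₀ w :=
    fun w hw => Function.update_of_ne hw _ _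
  refine ⟨Function.update c₀ v α, hc₀.of_induce_compl hagree ?_ ?_ ?_⟩
  · intro u hu w h
    rw [mem_singleton_iff.mp hu] at h ⊢
    rw [Function.update_self, hagree w (G.ne_of_adj h).symm]
    exact (hα w h).1
  · intro u hu ⟨w, hw⟩
    rw [mem_singleton_iff.mp hu] at hw ⊢
    exact ⟨Function.update c₀ v α w, w, ⟨hw, rfl⟩, fun u ⟨hvu, _⟩ => hv hvu hw⟩
  · intro w hw u hu hwv
    rw [mem_singleton_iff.mp hu] at hwv
    by_cases hout : ∃ u ∉ ({v} : Set V), G.Adj w u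
    · refine ⟨κ w, existsUnique_adj_of_induce_compl hagree ((hκ w hw).2 hout) ?_⟩
      rintro u hu -
      rw [mem_singleton_iff.mp hu, Function.update_self]
      exact (hα w hwv.symm).2
    · push Not at hout
      refine ⟨α, v, ⟨hwv, Function.update_self ..⟩, fun u ⟨hwu, _⟩ => ?_⟩
      by_contra huv
      exact hout u huv hwu

end Recoloring

lemma exists_fin_four_ne_ne_ne (a b c : Fin 4) : ∃ p, p ≠ a ∧ p ≠ b ∧ p ≠ c := by
  revert a b c
  decide

lemma exists_threadColoring {A₁ A₂ B₁ B₂ : Fin 4} (hA : A₁ ≠ A₂) :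
    ∃ x : ℕ → Fin 4, x 0 = A₁ ∧ x 6 = B₁ ∧ x 1 ≠ A₂ ∧ x 5 ≠ B₂ ∧ x 1 ≠ x 5 ∧
      ∀ i, i + 2 ≤ 6 → x i ≠ x (i + 1) ∧ x (i + 1) ≠ x (i + 2) ∧ x i ≠ x (i + 2) := by
  let seq (x₁ x₂ x₃ x₄ x₅ : Fin 4) : ℕ → Fin 4 := fun i => [A₁, x₁, x₂, x₃, x₄, x₅, B₁].getD i 0
  -- the pattern `A₁ p q r p q B₁` works as soon as `p` and `q` can be chosen distinct
  have periodic : ∀ p q, p ≠ A₁ ∧ p ≠ A₂ ∧ p ≠ B₁ → q ≠ A₁ ∧ q ≠ B₁ ∧ q ≠ B₂ → p ≠ q →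
      ∃ x : ℕ → Fin 4, x 0 = A₁ ∧ x 6 = B₁ ∧ x 1 ≠ A₂ ∧ x 5 ≠ B₂ ∧ x 1 ≠ x 5 ∧
        ∀ i, i + 2 ≤ 6 → x i ≠ x (i + 1) ∧ x (i + 1) ≠ x (i + 2) ∧ x i ≠ x (i + 2) := by
    intro p q hp hq hpq
    obtain ⟨r, hrp, hrq, -⟩ := exists_fin_four_ne_ne_ne p q q
    refine ⟨seq p q r p q, rfl, rfl, hp.2.1, hq.2.2, hpq, fun i hi => ?_⟩
    have : i ≤ 4 := by omega
    interval_cases i <;> simp [seq] <;> grind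
  by_cases h₁ : A₂ = B₁
  · obtain ⟨q, hq⟩ := exists_fin_four_ne_ne_ne A₁ B₁ B₂
    obtain ⟨p, hp⟩ := exists_fin_four_ne_ne_ne A₁ B₁ q
    exact periodic p q (by grind) hq (by grind)
  by_cases h₂ : A₂ = B₂
  · by_cases h₃ : A₁ = B₁
    · obtain ⟨q, hq⟩ := exists_fin_four_ne_ne_ne A₁ B₁ B₂
      obtain ⟨p, hp⟩ := exists_fin_four_ne_ne_ne A₁ A₂ q
      exact periodic p q (by grind) hq (by grind)
    -- here `A₁`, `A₂ = B₂` and `B₁` are distinct and `p = q` is forced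
    obtain ⟨s, hs⟩ := exists_fin_four_ne_ne_ne A₁ A₂ B₁
    refine ⟨seq s B₁ A₂ s A₁, rfl, rfl, hs.2.1, by grind, by grind, fun i hi => ?_⟩
    have : i ≤ 4 := by omega
    interval_cases i <;> simp [seq] <;> grind
  · obtain ⟨p, hp⟩ := exists_fin_four_ne_ne_ne A₁ A₂ B₁
    exact periodic p A₂ hp ⟨Ne.symm hA, h₁, h₂⟩ (by grind)

namespace SimpleGraph

variable {V : Type*} {G : SimpleGraph V}

/-- A thread may be closed: `a 0 = a L` is allowed. -/
structure IsThread (G : SimpleGraph V) (a : ℕ → V) (L : ℕ) : Prop where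
  adj : ∀ i < L, G.Adj (a i) (a (i + 1))
  eq_of_adj : ∀ i, 0 < i → i < L → ∀ w, G.Adj (a i) w → w = a (i - 1) ∨ w = a (i + 1)
  injOn_Iio : InjOn a (Iio L)
  injOn_Ioc : InjOn a (Ioc 0 L)

lemma image_Ioo_sub (a : ℕ → V) (L : ℕ) : (fun i => a (L - i)) '' Ioo 0 L = a '' Ioo 0 L := by
  ext v
  constructor <;> rintro ⟨i, ⟨hi₀, hiL⟩, rfl⟩ <;>
    exact ⟨L - i, ⟨by omega, by omega⟩, by simp only [show L - (L - i) = i by omega]⟩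

namespace IsThread

variable {a : ℕ → V} {L n : ℕ} {S : Set V} {c₀ c : V → Fin n}

lemma reverse (ha : G.IsThread a L) : G.IsThread (fun i => a (L - i)) L where
  adj i hi := by
    have := (ha.adj (L - (i + 1)) (by omega)).symm
    rwa [show L - (i + 1) + 1 = L - i by omega] at this
  eq_of_adj i hi hiL w hw := by
    rcases ha.eq_of_adj (L - i) (by omega) (by omega) w hw with h | h
    · exact Or.inr (by rwa [show L - i - 1 = L - (i + 1) by omega] at h)
    · exact Or.inl (by rwa [show L - i + 1 = L - (i - 1) by omega] at h)
  injOn_Iio i hi j hj hij := by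
    simp only [mem_Iio] at hi hj
    have := ha.injOn_Ioc (show L - i ∈ Ioc 0 L from ⟨by omega, by omega⟩)
      (show L - j ∈ Ioc 0 L from ⟨by omega, by omega⟩) hij
    omega
  injOn_Ioc i hi j hj hij := by
    simp only [mem_Ioc] at hi hj
    have := ha.injOn_Iio (show L - i ∈ Iio L from by simp only [mem_Iio]; omega)
      (show L - j ∈ Iio L from by simp only [mem_Iio]; omega) hij
    omega

lemma start_notMem (ha : G.IsThread a L) : a 0 ∉ a '' Ioo 0 L := by
  rintro ⟨i, ⟨hi₀, hiL⟩, hi⟩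
  have := ha.injOn_Iio (show i ∈ Iio L from hiL) (show 0 ∈ Iio L from hi₀.trans hiL) hi
  omega

lemma end_notMem (ha : G.IsThread a L) : a L ∉ a '' Ioo 0 L := by
  rintro ⟨i, ⟨hi₀, hiL⟩, hi⟩
  have := ha.injOn_Ioc (show i ∈ Ioc 0 L from ⟨hi₀, hiL.le⟩)
    (show L ∈ Ioc 0 L from ⟨hi₀.trans hiL, le_rfl⟩) hi
  omega

lemma eq_of_adj_of_notMem (ha : G.IsThread a L) {i : ℕ} (hi₀ : 0 < i) (hiL : i < L) {w : V}
    (hw : w ∉ a '' Ioo 0 L) (h : G.Adj w (a i)) : (i = 1 ∧ w = a 0) ∨ (i = L - 1 ∧ w = a L) := by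
  rcases ha.eq_of_adj i hi₀ hiL w h.symm with rfl | rfl
  · by_cases hi₁ : i = 1
    · exact Or.inl ⟨hi₁, by rw [hi₁]⟩
    · exact absurd ⟨i - 1, ⟨by omega, by omega⟩, rfl⟩ hw
  · by_cases hiL' : i + 1 = L
    · exact Or.inr ⟨by omega, by rw [hiL']⟩
    · exact absurd ⟨i + 1, ⟨by omega, by omega⟩, rfl⟩ hw

lemma exists_existsUnique_adj_start (ha : G.IsThread a L) (hL : 0 < L) (hS : a '' Ioo 0 L = S)
    (hagree : ∀ v ∉ S, c v = c₀ v) {k : Fin n}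
    (hk : (∃ u ∉ S, G.Adj (a 0) u) → ∃! u : ↥Sᶜ, G.Adj (a 0) u ∧ c₀ u = k)
    (h₁ : c (a 1) ≠ k) (hL₁ : a L = a 0 → c (a (L - 1)) ≠ k)
    (h₁L : a L = a 0 → c (a 1) ≠ c (a (L - 1))) :
    ∃ k, ∃! u, u ∈ G.neighborSet (a 0) ∧ c u = k := by
  subst hS
  have hnbr : ∀ u ∈ a '' Ioo 0 L, G.Adj (a 0) u → u = a 1 ∨ (a L = a 0 ∧ u = a (L - 1)) := by
    rintro _ ⟨i, ⟨hi₀, hiL⟩, rfl⟩ h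
    rcases ha.eq_of_adj_of_notMem hi₀ hiL ha.start_notMem h with ⟨rfl, -⟩ | ⟨rfl, hcl⟩
    · exact Or.inl rfl
    · exact Or.inr ⟨hcl.symm, rfl⟩
  by_cases hout : ∃ u ∉ a '' Ioo 0 L, G.Adj (a 0) u
  · refine ⟨k, existsUnique_adj_of_induce_compl hagree (hk hout) fun u hu h => ?_⟩
    rcases hnbr u hu h with rfl | ⟨hcl, rfl⟩
    · exact h₁
    · exact hL₁ hcl
  · push Not at hout
    refine ⟨c (a 1), a 1, ⟨ha.adj 0 hL, rfl⟩, fun u ⟨h, hu⟩ => ?_⟩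
    rcases hnbr u (by by_contra hu'; exact hout u hu' h) h with rfl | ⟨hcl, rfl⟩
    · rfl
    · exact absurd hu.symm (h₁L hcl)

theorem isPCFColoring (ha : G.IsThread a L) (hS : a '' Ioo 0 L = S)
    (hc₀ : IsPCFColoring (G.induce Sᶜ) (c₀ ∘ (↑))) (hagree : ∀ v ∉ S, c v = c₀ v) {κ : V → Fin n}
    (hκ : ∀ v ∉ S, (∃ u ∉ S, G.Adj v u) → ∃! u : ↥Sᶜ, G.Adj v u ∧ c₀ u = κ v)
    (hx : ∀ i, i + 2 ≤ L →
      c (a i) ≠ c (a (i + 1)) ∧ c (a (i + 1)) ≠ c (a (i + 2)) ∧ c (a i) ≠ c (a (i + 2)))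
    (h₁ : c (a 1) ≠ κ (a 0)) (hL₁ : c (a (L - 1)) ≠ κ (a L)) (h₁L : c (a 1) ≠ c (a (L - 1))) :
    IsPCFColoring G c := by
  subst hS
  have hx' : ∀ i, 0 < i → i < L →
      c (a i) ≠ c (a (i - 1)) ∧ c (a i) ≠ c (a (i + 1)) ∧ c (a (i - 1)) ≠ c (a (i + 1)) := by
    intro i hi₀ hiL
    have := hx (i - 1) (by omega)
    rw [show i - 1 + 1 = i by omega, show i - 1 + 2 = i + 1 by omega] at this
    exact ⟨this.1.symm, this.2.1, this.2.2⟩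
  refine hc₀.of_induce_compl hagree ?_ ?_ ?_
  · rintro _ ⟨i, ⟨hi₀, hiL⟩, rfl⟩ w h
    rcases ha.eq_of_adj i hi₀ hiL w h with rfl | rfl
    · exact (hx' i hi₀ hiL).1
    · exact (hx' i hi₀ hiL).2.1
  · rintro _ ⟨i, ⟨hi₀, hiL⟩, rfl⟩ -
    refine ⟨c (a (i - 1)), a (i - 1), ⟨?_, rfl⟩, fun w ⟨h, hw⟩ => ?_⟩
    · have := (ha.adj (i - 1) (by omega)).symm
      rwa [show i - 1 + 1 = i by omega] at this
    rcases ha.eq_of_adj i hi₀ hiL w h with rfl | rfl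
    · rfl
    · exact absurd hw.symm (hx' i hi₀ hiL).2.2
  · rintro v hv _ ⟨i, ⟨hi₀, hiL⟩, rfl⟩ h
    rcases ha.eq_of_adj_of_notMem hi₀ hiL hv h with ⟨-, rfl⟩ | ⟨-, rfl⟩
    · exact ha.exists_existsUnique_adj_start (by omega) rfl hagree (hκ _ hv) h₁
        (fun h => by rwa [← h]) (fun _ => h₁L)
    · have := ha.reverse.exists_existsUnique_adj_start (by omega) (image_Ioo_sub a L) hagree
        (hκ _ hv) (by simpa using hL₁)
        (fun h => by
          simp only [Nat.sub_self, Nat.sub_zero, show L - (L - 1) = 1 by omega] at h ⊢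
          rwa [← h])
        (fun _ => by simpa [show L - (L - 1) = 1 by omega] using h₁L.symm)
      simpa using this

theorem exists_isPCFColoring (ha : G.IsThread a 6) {c₀ : V → Fin 4}
    (hc₀ : IsPCFColoring (G.induce (a '' Ioo 0 6)ᶜ) (c₀ ∘ (↑))) :
    ∃ c : V → Fin 4, IsPCFColoring G c := by
  classical
  obtain ⟨κ, hκ⟩ := hc₀.exists_witness (by norm_num)
  obtain ⟨x, hx₀, hx₆, hx₁, hx₅, hx₁₅, hx⟩ :=
    exists_threadColoring (B₁ := c₀ (a 6)) (B₂ := κ (a 6)) (hκ _ ha.start_notMem).1.symm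
  set S := a '' Ioo 0 6
  let c := S.piecewise (fun v => x (Function.invFunOn a (Ioo 0 6) v)) c₀
  have hagree : ∀ v ∉ S, c v = c₀ v := fun v hv => S.piecewise_eq_of_notMem _ _ hv
  have hca : ∀ i ≤ 6, c (a i) = x i := by
    intro i hi
    rcases Nat.eq_zero_or_pos i with rfl | hi₀
    · rw [hagree _ ha.start_notMem, hx₀]
    rcases hi.lt_or_eq with hi₆ | rfl
    · exact (S.piecewise_eq_of_mem _ _ (mem_image_of_mem a ⟨hi₀, hi₆⟩)).trans
        (congrArg x ((ha.injOn_Ioc.mono Ioo_subset_Ioc_self).leftInvOn_invFunOn ⟨hi₀, hi₆⟩))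
    · rw [hagree _ ha.end_notMem, hx₆]
  refine ⟨c, ha.isPCFColoring rfl hc₀ hagree (fun v hv => (hκ v hv).2) (fun i hi => ?_) ?_ ?_ ?_⟩
  · rw [hca i (by omega), hca (i + 1) (by omega), hca (i + 2) (by omega)]
    exact hx i hi
  · rwa [hca 1 (by norm_num)]
  · rwa [hca 5 (by norm_num)]
  · rwa [hca 1 (by norm_num), hca 5 (by norm_num)]

end IsThread

def BranchVerticesApart (G : SimpleGraph V) [G.LocallyFinite] (d : ℕ) : Prop :=
  ∀ u v : V, u ≠ v → 3 ≤ G.degree u → 3 ≤ G.degree v → ∀ p : G.Walk u v, d ≤ p.length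

lemma BranchVerticesApart.of_copy {W : Type*} {H : SimpleGraph W} [G.LocallyFinite]
    [H.LocallyFinite] {d : ℕ} (f : Copy H G) (h : G.BranchVerticesApart d) :
    H.BranchVerticesApart d := fun u v huv hu hv p =>
  p.length_map f.toHom ▸ h (f u) (f v) (f.injective.ne huv) (hu.trans (f.degree_le u))
    (hv.trans (f.degree_le v)) (p.map f.toHom)

lemma eq_or_eq_of_degree_eq_two {v : V} [Fintype (G.neighborSet v)] (hv : G.degree v = 2)
    {x y w : V} (hx : G.Adj v x) (hy : G.Adj v y) (hxy : x ≠ y) (hw : G.Adj v w) :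
    w = x ∨ w = y := by
  classical
  have : {x, y} = G.neighborFinset v := Finset.eq_of_subset_of_card_le
    (by simp [Finset.insert_subset_iff, hx, hy])
    (by rw [Finset.card_pair hxy, card_neighborFinset_eq_degree, hv])
  simpa [← this] using (G.mem_neighborFinset v w).mpr hw

variable [G.LocallyFinite]

structure Walk.IsSuspended {u v : V} (p : G.Walk u v) : Prop where
  isPath : p.IsPath
  degree_getVert : ∀ i, 0 < i → i < p.length → G.degree (p.getVert i) = 2

namespace IsThread

variable {L : ℕ}

lemma of_walk {u w : V} (q : G.Walk u w) (hL : 3 ≤ L) (hLq : L ≤ q.length)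
    (hdeg : ∀ i, 0 < i → i < L → G.degree (q.getVert i) = 2)
    (h₁ : InjOn q.getVert (Iio L)) (h₂ : InjOn q.getVert (Ioc 0 L)) : G.IsThread q.getVert L where
  adj i hi := q.adj_getVert_succ (by omega)
  eq_of_adj i hi₀ hiL w hw := by
    have hprev := (q.adj_getVert_succ (i := i - 1) (by omega)).symm
    rw [show i - 1 + 1 = i by omega] at hprev
    refine eq_or_eq_of_degree_eq_two (hdeg i hi₀ hiL) hprev (q.adj_getVert_succ (by omega))
      (fun h => ?_) hw
    rcases (show i = 1 ∨ 2 ≤ i by omega) with rfl | hi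
    · have := h₁ (show 0 ∈ Iio L by simp only [mem_Iio]; omega)
        (show 2 ∈ Iio L by simp only [mem_Iio]; omega) h
      omega
    · have := h₂ (show i - 1 ∈ Ioc 0 L from ⟨by omega, by omega⟩)
        (show i + 1 ∈ Ioc 0 L from ⟨by omega, by omega⟩) h
      omega
  injOn_Iio := h₁
  injOn_Ioc := h₂

lemma of_isSuspended {u w : V} {p : G.Walk u w} (hp : p.IsSuspended) (hL : 3 ≤ L)
    (hLp : L ≤ p.length) : G.IsThread p.getVert L :=
  of_walk p hL hLp (fun i hi₀ hiL => hp.degree_getVert i hi₀ (by omega))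
    (hp.isPath.getVert_injOn.mono fun i hi => by simp only [mem_Iio, mem_ofPred_eq] at hi ⊢; omega)
    (hp.isPath.getVert_injOn.mono fun i hi => by simp only [mem_Ioc, mem_ofPred_eq] at hi ⊢; omega)

lemma of_isCycle {u : V} {c : G.Walk u u} (hc : c.IsCycle) (hL : c.length = L)
    (hdeg : ∀ i, 0 < i → i < L → G.degree (c.getVert i) = 2) : G.IsThread c.getVert L :=
  of_walk c (hL ▸ hc.three_le_length) hL.ge hdeg
    (hc.getVert_injOn'.mono fun i hi => by simp only [mem_Iio, mem_ofPred_eq] at hi ⊢; omega)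
    (hc.getVert_injOn.mono fun i hi => by simp only [mem_Ioc, mem_ofPred_eq] at hi ⊢; omega)

end IsThread

namespace Walk.IsSuspended

variable {u v w : V} {p : G.Walk v u}

lemma eq_end_of_adj_start (hp : p.IsSuspended) (hvw : G.Adj v w) (hw₁ : w ≠ p.getVert 1)
    (hw : w ∈ p.support) : w = u := by
  obtain ⟨j, rfl, hj⟩ := mem_support_iff_exists_getVert.mp hw
  rcases hj.lt_or_eq with hj | rfl
  · exfalso
    have hvw' : G.Adj (p.getVert 0) (p.getVert j) := by rwa [p.getVert_zero]
    have hj₀ : j ≠ 0 := by rintro rfl; exact G.loopless.irrefl _ hvw'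
    have hj₁ : j ≠ 1 := by rintro rfl; exact hw₁ rfl
    have hinj {i k : ℕ} (hi : i ≤ p.length) (hk : k ≤ p.length) (h : p.getVert i = p.getVert k) :
        i = k := hp.isPath.getVert_injOn hi hk h
    rcases (IsThread.of_isSuspended hp (by omega) le_rfl).eq_of_adj j (by omega) hj _ hvw'.symm
      with h | h <;>
    · have := hinj (by omega) (by omega) h
      omega
  · exact p.getVert_length

lemma exists_isThread_of_adj (hp : p.IsSuspended) (huv : G.Adj u v) (hv : G.degree v = 2)
    (hlen : 2 ≤ p.length) (hg : 6 ≤ G.egirth) : ∃ a, G.IsThread a 6 := by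
  have hc : (cons huv p).IsCycle :=
    isCycle_iff_isPath_tail_and_le_length.mpr ⟨by simpa using hp.isPath, by simp; omega⟩
  have h6 : 6 ≤ p.length + 1 := by
    have := hg.trans (egirth_le_length hc)
    simp only [length_cons, Nat.cast_add, Nat.cast_one] at this
    exact_mod_cast this
  rcases (show 6 ≤ p.length ∨ p.length = 5 by omega) with hlong | h5
  · exact ⟨_, IsThread.of_isSuspended hp (by norm_num) hlong⟩
  · refine ⟨_, IsThread.of_isCycle hc (by simp [h5]) fun i hi₀ hi₆ => ?_⟩
    rw [getVert_cons _ _ hi₀.ne']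
    rcases (show i = 1 ∨ 2 ≤ i by omega) with rfl | hi
    · rwa [p.getVert_zero]
    · exact hp.degree_getVert _ (by omega) (by omega)

lemma exists_isThread_or_extend (hp : p.IsSuspended) (hlen : 0 < p.length)
    (hdeg : ∀ w, 2 ≤ G.degree w) (hu : 3 ≤ G.degree u ∨ ∀ w, G.degree w < 3)
    (hg : 6 ≤ G.egirth) (hfar : G.BranchVerticesApart 6) :
    (∃ a, G.IsThread a 6) ∨
      ∃ (w : V) (q : G.Walk w u), q.IsSuspended ∧ q.length = p.length + 1 := by
  rcases (hdeg v).lt_or_eq with hv | hv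
  · have hvu : v ≠ u := by
      intro h
      have := hp.isPath.getVert_injOn (show 0 ∈ {i | i ≤ p.length} by simp)
        (show p.length ∈ {i | i ≤ p.length} by simp) (by rw [p.getVert_zero, p.getVert_length, h])
      omega
    have hu' : 3 ≤ G.degree u := hu.resolve_right fun h => absurd (h v) (by omega)
    exact Or.inl ⟨_, IsThread.of_isSuspended hp (by norm_num) (hfar v u hvu hv hu' p)⟩
  obtain ⟨w, hvw, hw₁⟩ : ∃ w, G.Adj v w ∧ w ≠ p.getVert 1 := by
    obtain ⟨w, hw, hw₁⟩ := Finset.exists_mem_ne (s := G.neighborFinset v)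
      (by rw [card_neighborFinset_eq_degree]; omega) (p.getVert 1)
    exact ⟨w, (G.mem_neighborFinset v w).mp hw, hw₁⟩
  by_cases hw : w ∈ p.support
  · obtain rfl := hp.eq_end_of_adj_start hvw hw₁ hw
    have hlen : 2 ≤ p.length := by
      by_contra h
      exact hw₁ (by rw [show 1 = p.length by omega, p.getVert_length])
    exact Or.inl (hp.exists_isThread_of_adj hvw.symm hv.symm hlen hg)
  · refine Or.inr ⟨w, cons hvw.symm p, ⟨hp.isPath.cons hw, fun i hi₀ hi => ?_⟩, rfl⟩
    rw [getVert_cons _ _ hi₀.ne']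
    rcases (show i = 1 ∨ 2 ≤ i by omega) with rfl | hi'
    · rw [p.getVert_zero, hv]
    · exact hp.degree_getVert _ (by omega) (by simp only [length_cons] at hi; omega)

end Walk.IsSuspended

theorem exists_isThread [Fintype V] [DecidableRel G.Adj] [Nonempty V]
    (hdeg : ∀ v, 2 ≤ G.degree v) (hg : 6 ≤ G.egirth) (hfar : G.BranchVerticesApart 6) :
    ∃ a, G.IsThread a 6 := by
  obtain ⟨u, hu⟩ : ∃ u : V, 3 ≤ G.degree u ∨ ∀ w, G.degree w < 3 := by
    by_cases h : ∃ u, 3 ≤ G.degree u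
    · exact h.imp fun u hu => Or.inl hu
    · push Not at h
      exact ⟨Classical.arbitrary V, Or.inr h⟩
  -- otherwise suspended paths ending at `u` could be prolonged beyond the number of vertices
  by_contra hno
  have long : ∀ k, ∃ (v : V) (p : G.Walk v u), p.IsSuspended ∧ p.length = k + 1 := by
    intro k
    induction k with
    | zero =>
      obtain ⟨v, huv⟩ := (G.degree_pos_iff_exists_adj u).mp (by have := hdeg u; omega)
      exact ⟨v, .cons huv.symm .nil,
        ⟨Walk.IsPath.nil.cons (by simpa using huv.ne'), fun i hi₀ hi => by simp at hi; omega⟩, rfl⟩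
    | succ k ih =>
      obtain ⟨v, p, hp, hk⟩ := ih
      obtain ⟨w, q, hq, hqk⟩ :=
        (hp.exists_isThread_or_extend (by omega) hdeg hu hg hfar).resolve_left hno
      exact ⟨w, q, hq, by omega⟩
  obtain ⟨v, p, hp, hk⟩ := long (Fintype.card V)
  have := hp.isPath.length_lt
  omega

lemma exists_reducible_set [Fintype V] [DecidableRel G.Adj] [Nonempty V] (hg : 6 ≤ G.egirth)
    (hfar : G.BranchVerticesApart 6) :
    ∃ S : Set V, S.Nonempty ∧ ∀ c₀ : V → Fin 4, IsPCFColoring (G.induce Sᶜ) (c₀ ∘ (↑)) →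
      ∃ c : V → Fin 4, IsPCFColoring G c := by
  by_cases h : ∃ v, G.degree v ≤ 1
  · obtain ⟨v, hv⟩ := h
    refine ⟨{v}, singleton_nonempty v, fun c₀ hc₀ =>
      exists_isPCFColoring_of_neighborSet_subsingleton (fun x hx y hy => ?_) (by norm_num) hc₀⟩
    exact Finset.card_le_one.mp hv x ((G.mem_neighborFinset v x).mpr hx) y
      ((G.mem_neighborFinset v y).mpr hy)
  · push Not at h
    obtain ⟨a, ha⟩ := exists_isThread (fun v => h v) hg hfar
    exact ⟨a '' Ioo 0 6, ⟨a 1, mem_image_of_mem a ⟨by norm_num, by norm_num⟩⟩,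
      fun c₀ hc₀ => ha.exists_isPCFColoring hc₀⟩

theorem exists_isPCFColoring_fin_four [Fintype V] [DecidableRel G.Adj] (hg : 6 ≤ G.egirth)
    (hfar : G.BranchVerticesApart 6) : ∃ c : V → Fin 4, IsPCFColoring G c := by
  induction hn : Fintype.card V using Nat.strong_induction_on generalizing V with
  | _ n ih =>
  classical
  cases isEmpty_or_nonempty V
  · exact ⟨isEmptyElim, fun u => isEmptyElim u, fun v => isEmptyElim v⟩
  obtain ⟨S, ⟨v, hv⟩, hext⟩ := exists_reducible_set hg hfar
  obtain ⟨c', hc'⟩ := ih _ (hn ▸ Fintype.card_subtype_lt (p := (· ∈ Sᶜ)) (not_not.mpr hv))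
    (G := G.induce Sᶜ) (hg.trans (IsContained.egirth_le ⟨Copy.induce G Sᶜ⟩))
    (hfar.of_copy (Copy.induce G Sᶜ)) rfl
  refine hext (Function.extend Subtype.val c' fun _ => 0) ?_
  rwa [Function.extend_comp Subtype.val_injective]

end SimpleGraph

theorem pcf_le_four_of_girth_and_far {V : Type*} [Fintype V] (G : SimpleGraph V)
    [DecidableRel G.Adj] (hgirth : 6 ≤ G.egirth)
    (hfar : ∀ u v : V, u ≠ v → 3 ≤ G.degree u → 3 ≤ G.degree v →
      ∀ p : G.Walk u v, 6 ≤ p.length) :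
    pcfChromNum G ≤ 4 := by
  obtain ⟨c, hc⟩ := exists_isPCFColoring_fin_four hgirth hfar
  exact Nat.sInf_le ⟨c, hc⟩
end

section
/- If G is a graph such that for every vertex v the chromatic number of the subgraph induced by N(v) is at least ⌊deg(v)/2⌋ + 1, then χ_pcf(G) = χ(G). -/
open SimpleGraph

/-- Under the neighborhood condition, any proper coloring is PCF. -/
lemma proper_is_pcf {V : Type*} [Fintype V] (G : SimpleGraph V) [DecidableRel G.Adj]
    (hcond : ∀ v : V, G.degree v / 2 + 1 ≤ chromNum (G.induce (G.neighborSet v)))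
    {n : ℕ} (c : V → Fin n) (hp : ∀ u v, G.Adj u v → c u ≠ c v) :
    IsPCFColoring G c := by
  refine ⟨hp, fun v hv => ?_⟩
  by_contra hn
  push_neg at hn
  set s := G.neighborFinset v with hs
  set img := s.image c with himg
  have h2 : ∀ k ∈ img, 2 ≤ (s.filter (fun u => c u = k)).card := by
    intro k hk
    obtain ⟨u, hu, hcu⟩ := Finset.mem_image.mp hk
    have h1 : 1 ≤ (s.filter (fun u => c u = k)).card := by
      apply Finset.card_pos.mpr
      exact ⟨u, Finset.mem_filter.mpr ⟨hu, hcu⟩⟩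
    have hne : (s.filter (fun u => c u = k)).card ≠ 1 := by
      intro h1eq
      obtain ⟨a, ha⟩ := Finset.card_eq_one.mp h1eq
      apply hn k
      have hamem := ha ▸ Finset.mem_singleton_self a
      have ha' := Finset.mem_filter.mp hamem
      refine ⟨a, ⟨(G.mem_neighborFinset v a).mp ha'.1, ha'.2⟩, ?_⟩
      intro u' ⟨hu'1, hu'2⟩
      have : u' ∈ s.filter (fun u => c u = k) :=
        Finset.mem_filter.mpr ⟨(G.mem_neighborFinset v u').mpr hu'1, hu'2⟩
      rw [ha] at this
      exact Finset.mem_singleton.mp this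
    omega
  have hsum : 2 * img.card ≤ s.card := by
    calc 2 * img.card = ∑ _k ∈ img, 2 := by rw [Finset.sum_const]; ring
    _ ≤ ∑ k ∈ img, (s.filter (fun u => c u = k)).card := Finset.sum_le_sum h2
    _ = s.card := (Finset.card_eq_sum_card_image c s).symm
  have hcard : img.card ≤ G.degree v / 2 := by
    rw [Nat.le_div_iff_mul_le (by norm_num : 0 < 2)]
    rw [← G.card_neighborFinset_eq_degree v, ← hs]
    omega
  -- The induced graph on N(v) is colorable with img.card colors
  have hcol : (G.induce (G.neighborSet v)).Colorable img.card := by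
    have C : (G.induce (G.neighborSet v)).Coloring {k // k ∈ img} := by
      refine Coloring.mk (fun u => ⟨c u.1, Finset.mem_image.mpr
        ⟨u.1, (G.mem_neighborFinset v u.1).mpr u.2, rfl⟩⟩) ?_
      intro a b hab
      simp only [ne_eq, Subtype.mk.injEq]
      exact hp a.1 b.1 hab
    have := C.colorable
    rwa [Fintype.card_coe] at this
  have hle : chromNum (G.induce (G.neighborSet v)) ≤ img.card :=
    Nat.sInf_le hcol
  have := hcond v
  omega

theorem pcf_eq_chrom_of_neighborhood_condition {V : Type*} [Fintype V] (G : SimpleGraph V)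
    [DecidableRel G.Adj]
    (hcond : ∀ v : V, G.degree v / 2 + 1 ≤ chromNum (G.induce (G.neighborSet v))) :
    pcfChromNum G = chromNum G := by
  unfold pcfChromNum chromNum
  congr 1
  ext n
  constructor
  · rintro ⟨c, hc⟩
    exact ⟨Coloring.mk c fun {a b} hab => hc.1 a b hab⟩
  · rintro ⟨C⟩
    exact ⟨C, proper_is_pcf G hcond C fun u v h => C.valid h⟩
end

section
/- Every chordal graph G of maximum degree Δ satisfies χ_pcf(G) ≤ 2Δ + 1. -/
open SimpleGraph

/-- A graph is chordal iff it has no induced cycle of length at least 4. -/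
def Chordal {V : Type*} (G : SimpleGraph V) : Prop :=
  ∀ n : ℕ, 4 ≤ n → IsEmpty (SimpleGraph.cycleGraph n ↪g G)

/-!
A finite chordal graph has a perfect elimination ordering, in which every vertex is simplicial
among the vertices after it. This comes from Dirac's lemma in the strong form "`G[s]` has a
simplicial vertex outside any clique `K ⊉ s`", by induction on `s`: for nonadjacent `a, b ∈ s`,
the neighbours of `b` attached to the component `C` of `a` in `G[s] - N[b]` form a clique `S`
(two nonadjacent ones would close an induced cycle of length at least 4 through `b`), and the
induction hypothesis for `C ∪ S` and for `s \ C` gives two nonadjacent simplicial vertices.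

Along such an ordering, give each non-isolated vertex `v` the neighbour `f v`: its first later
neighbour if it has one, else its last earlier neighbour. Colour greedily from the last vertex to
the first, letting `u` avoid its later neighbours and the vertices `f i > u` for later neighbours
`i` of `u`: at most `2Δ` colours are forbidden. The colour of `f v` is then unique in `N(v)`: an
earlier neighbour `j` of `v` has avoided `f v`, and a later one is adjacent to `f v < j` by the
elimination property, so `f v` has avoided `j`.
-/

namespace SimpleGraph

variable {V : Type*} {G : SimpleGraph V}

theorem cycleGraph_adj_iff_val {n : ℕ} {a b : Fin (n + 2)} :
    (cycleGraph (n + 2)).Adj a b ↔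
      (a : ℕ) + 1 = b ∨ (b : ℕ) + 1 = a ∨ ((a : ℕ) = 0 ∧ (b : ℕ) = n + 1) ∨
        ((b : ℕ) = 0 ∧ (a : ℕ) = n + 1) := by
  rw [cycleGraph_adj']
  rcases lt_trichotomy a b with h | rfl | h
  · rw [Fin.coe_sub_iff_lt.2 h, Fin.coe_sub_iff_le.2 h.le]
    have := b.isLt
    rw [Fin.lt_def] at h
    omega
  · simp only [sub_self, Fin.val_zero]
    omega
  · rw [Fin.coe_sub_iff_le.2 h.le, Fin.coe_sub_iff_lt.2 h]
    have := a.isLt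
    rw [Fin.lt_def] at h
    omega

namespace Walk

variable {u v : V}

theorem exists_support_subset_of_adj_getVert (p : G.Walk u v) {i j : ℕ}
    (h : G.Adj (p.getVert i) (p.getVert j)) :
    ∃ q : G.Walk u v, q.length ≤ i + 1 + (p.length - j) ∧ q.support ⊆ p.support := by
  refine ⟨(p.take i).append (cons h (p.drop j)), ?_, ?_⟩
  · simp only [length_append, take_length, length_cons, drop_length]
    omega
  · rw [support_append, support_cons, List.tail_cons, support_take,
      drop_support_eq_support_drop_min]
    exact List.append_subset.2 ⟨(List.take_sublist _ _).subset, (List.drop_sublist _ _).subset⟩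

theorem exists_isPath_chordless (p : G.Walk u v) :
    ∃ q : G.Walk u v, q.IsPath ∧ q.support ⊆ p.support ∧
      ∀ i j, i + 1 < j → j ≤ q.length → ¬ G.Adj (q.getVert i) (q.getVert j) := by
  classical
  induction h : p.length using Nat.strong_induction_on generalizing p with
  | _ n ih =>
  by_cases hchord : ∃ i j, i + 1 < j ∧ j ≤ p.bypass.length ∧
      G.Adj (p.bypass.getVert i) (p.bypass.getVert j)
  · obtain ⟨i, j, hij, hj, hadj⟩ := hchord
    obtain ⟨q, hq, hqp⟩ := p.bypass.exists_support_subset_of_adj_getVert hadj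
    obtain ⟨r, hr, hrq, hrc⟩ :=
      ih q.length (by have := p.length_bypass_le_length; omega) q rfl
    exact ⟨r, hr, fun _ hz ↦ p.support_bypass_subset_support (hqp (hrq hz)), hrc⟩
  · push Not at hchord
    exact ⟨p.bypass, p.bypass_isPath, p.support_bypass_subset_support, hchord⟩

theorem exists_cycleGraph_embedding {x y v : V} {q : G.Walk x y} (hq : q.IsPath)
    (hchord : ∀ i j, i + 1 < j → j ≤ q.length → ¬ G.Adj (q.getVert i) (q.getVert j))
    (hx : G.Adj v x) (hy : G.Adj v y)
    (hv : ∀ i, 0 < i → i < q.length → q.getVert i ≠ v ∧ ¬ G.Adj v (q.getVert i)) :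
    Nonempty (cycleGraph (q.length + 2) ↪g G) := by
  let g : ℕ → V := fun a ↦ if a ≤ q.length then q.getVert a else v
  have hg_apex : ∀ a ≤ q.length,
      G.Adj (g a) (g (q.length + 1)) ↔ a + 1 = q.length + 1 ∨ a = 0 := by
    intro a ha
    simp only [g, if_pos ha, if_neg (show ¬ q.length + 1 ≤ q.length by omega)]
    rcases Nat.eq_zero_or_pos a with rfl | ha₀
    · simpa using hx.symm
    rcases ha.lt_or_eq with hak | rfl
    · simpa [ha₀.ne', hak.ne] using fun h ↦ (hv a ha₀ hak).2 h.symm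
    · simpa using hy.symm
  have hg_adj : ∀ a b, a ≤ q.length + 1 → b ≤ q.length + 1 → (G.Adj (g a) (g b) ↔
      a + 1 = b ∨ b + 1 = a ∨ (a = 0 ∧ b = q.length + 1) ∨ (b = 0 ∧ a = q.length + 1)) := by
    intro a b ha hb
    wlog hab : a ≤ b generalizing a b
    · rw [G.adj_comm, this b a hb ha (by omega)]
      omega
    rcases hab.lt_or_eq with hab | rfl
    swap
    · exact iff_of_false (G.loopless.irrefl _) (by omega)
    rcases hb.lt_or_eq with hbk | rfl
    · simp only [g, if_pos (show a ≤ q.length by omega), if_pos (show b ≤ q.length by omega)]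
      rcases (Nat.succ_le_of_lt hab).lt_or_eq with hab' | rfl
      · exact iff_of_false (hchord a b hab' (by omega)) (by omega)
      · simpa using q.adj_getVert_succ (by omega)
    · rw [hg_apex a (by omega)]
      omega
  have hg_inj : ∀ a b, a ≤ q.length + 1 → b ≤ q.length + 1 → g a = g b → a = b := by
    intro a b ha hb hab
    wlog hle : a ≤ b generalizing a b
    · exact (this b a hb ha hab.symm (by omega)).symm
    by_contra hne
    have ha' : a ≤ q.length := by omega
    rcases hb.lt_or_eq with hbk | rfl
    · simp only [g, if_pos ha', if_pos (show b ≤ q.length by omega)] at hab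
      exact hne (hq.getVert_injOn ha' (show b ≤ q.length by omega) hab)
    · simp only [g, if_pos ha', if_neg (show ¬ q.length + 1 ≤ q.length by omega)] at hab
      rcases Nat.eq_zero_or_pos a with rfl | ha₀
      · exact hx.ne (by simpa using hab.symm)
      rcases ha'.lt_or_eq with hak | rfl
      · exact (hv a ha₀ hak).1 hab
      · exact hy.ne (by simpa using hab.symm)
  exact ⟨{ toFun := fun a ↦ g a
           inj' := fun a b h ↦ Fin.ext (hg_inj _ _ (by omega) (by omega) h)
           map_rel_iff' := fun {a b} ↦ by
             rw [cycleGraph_adj_iff_val]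
             exact hg_adj _ _ (by omega) (by omega) }⟩

end Walk

def IsSimplicialIn (G : SimpleGraph V) (s : Set V) (v : V) : Prop :=
  G.IsClique {w | w ∈ s ∧ G.Adj v w}

theorem IsSimplicialIn.of_forall_adj_mem {s t : Set V} {v : V} (hv : G.IsSimplicialIn t v)
    (hst : ∀ w ∈ s, G.Adj v w → w ∈ t) : G.IsSimplicialIn s v :=
  hv.subset <| Set.ofPred_subset_ofPred.2 fun w hw ↦ ⟨hst w hw.1 hw.2, hw.2⟩

def componentIn (G : SimpleGraph V) (T : Set V) (a : V) : Set V :=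
  {w | ∃ p : G.Walk a w, ∀ z ∈ p.support, z ∈ T}

theorem componentIn_subset {T : Set V} {a : V} : G.componentIn T a ⊆ T :=
  fun w ⟨p, hp⟩ ↦ hp w p.end_mem_support

theorem mem_componentIn_of_adj {T : Set V} {a u w : V} (hu : u ∈ G.componentIn T a)
    (hw : w ∈ T) (huw : G.Adj u w) : w ∈ G.componentIn T a := by
  obtain ⟨p, hp⟩ := hu
  refine ⟨p.concat huw, fun z hz ↦ ?_⟩
  rw [Walk.support_concat, List.mem_append, List.mem_singleton] at hz
  exact hz.elim (hp z) (· ▸ hw)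

theorem exists_adj_forall_adj_ne [LinearOrder V] [Finite V] (v : V)
    (hv : (G.neighborSet v).Nonempty) :
    ∃ w, G.Adj v w ∧ ∀ j, G.Adj v j → j ≠ w → (j < v → j < w) ∧ (v < j → v < w ∧ w < j) := by
  by_cases hlater : ∃ j, v < j ∧ G.Adj v j
  · obtain ⟨w, ⟨hvw, hadj⟩, hmin⟩ :=
      Set.exists_min_image {j | v < j ∧ G.Adj v j} id (Set.toFinite _) hlater
    exact ⟨w, hadj, fun j hj hjw ↦ ⟨fun hjv ↦ hjv.trans hvw,
      fun hvj ↦ ⟨hvw, (hmin j ⟨hvj, hj⟩).lt_of_ne hjw.symm⟩⟩⟩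
  · push Not at hlater
    obtain ⟨w, hadj, hmax⟩ := Set.exists_max_image (G.neighborSet v) id (Set.toFinite _) hv
    exact ⟨w, hadj, fun j hj hjw ↦ ⟨fun _ ↦ (hmax j hj).lt_of_ne hjw,
      fun hvj ↦ absurd hj (hlater j hvj)⟩⟩

end SimpleGraph

section

variable {V : Type*} {G : SimpleGraph V}

theorem Chordal.adj_of_walk (hG : Chordal G) {v x y : V} (hx : G.Adj v x) (hy : G.Adj v y)
    (hxy : x ≠ y) (p : G.Walk x y)
    (hp : ∀ z ∈ p.support, z ≠ x → z ≠ y → z ≠ v ∧ ¬ G.Adj v z) : G.Adj x y := by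
  by_contra hnxy
  obtain ⟨q, hq, hqp, hchord⟩ := p.exists_isPath_chordless
  have hlen : 2 ≤ q.length := by
    by_contra! h
    interval_cases hl : q.length
    · exact hxy (Walk.eq_of_length_eq_zero hl)
    · exact hnxy (Walk.adj_of_length_eq_one hl)
  have hv : ∀ i, 0 < i → i < q.length → q.getVert i ≠ v ∧ ¬ G.Adj v (q.getVert i) :=
    fun i hi₀ hi ↦ hp _ (hqp (q.getVert_mem_support i))
      (by rw [Ne, hq.getVert_eq_start_iff hi.le]; omega)
      (by rw [Ne, hq.getVert_eq_end_iff hi.le]; omega)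
  obtain ⟨e⟩ := Walk.exists_cycleGraph_embedding hq hchord hx hy hv
  exact (hG _ (by omega)).false e

theorem Chordal.isClique_adj_componentIn (hG : Chordal G) {a b : V} {T : Set V}
    (hT : ∀ z ∈ T, z ≠ b ∧ ¬ G.Adj b z) :
    G.IsClique {x | G.Adj b x ∧ ∃ u ∈ G.componentIn T a, G.Adj u x} := by
  rintro x ⟨hbx, ux, ⟨px, hpx⟩, huxx⟩ y ⟨hby, uy, ⟨py, hpy⟩, huyy⟩ hxy
  refine hG.adj_of_walk hbx hby hxy (.cons huxx.symm ((px.reverse.append py).concat huyy)) ?_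
  intro z hz hzx hzy
  simp only [Walk.support_cons, Walk.support_concat, Walk.support_append, Walk.support_reverse,
    List.mem_cons, List.mem_append, List.mem_reverse, List.mem_nil_iff, or_false] at hz
  rcases hz with rfl | (hz | hz) | rfl
  · exact absurd rfl hzx
  · exact hT z (hpx z hz)
  · exact hT z (hpy z (List.mem_of_mem_tail hz))
  · exact absurd rfl hzy

theorem Chordal.exists_isSimplicialIn_notMem [Finite V] (hG : Chordal G) (s K : Set V)
    (hK : G.IsClique K) (hsK : ¬ s ⊆ K) : ∃ v ∈ s, v ∉ K ∧ G.IsSimplicialIn s v := by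
  induction s using WellFoundedLT.induction generalizing K with
  | _ s ih =>
  by_cases hs : G.IsClique s
  · obtain ⟨v, hvs, hvK⟩ := Set.not_subset.1 hsK
    exact ⟨v, hvs, hvK, hs.subset fun w hw ↦ hw.1⟩
  obtain ⟨a, ha, b, hb, hab, hnab⟩ : ∃ a ∈ s, ∃ b ∈ s, a ≠ b ∧ ¬ G.Adj a b := by
    simpa [IsClique, Set.Pairwise] using hs
  set T := {w | w ∈ s ∧ w ≠ b ∧ ¬ G.Adj b w}
  set C := G.componentIn T a
  set S := {w | w ∈ s ∧ w ∉ C ∧ ∃ u ∈ C, G.Adj u w}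
  have hCT : C ⊆ T := componentIn_subset
  have haC : a ∈ C := ⟨.nil, by simpa [T, ha, hab] using fun h ↦ hnab h.symm⟩
  have hbS : b ∉ S := fun ⟨_, _, u, hu, hub⟩ ↦ (hCT hu).2.2 hub.symm
  have hS : G.IsClique S := by
    refine (hG.isClique_adj_componentIn (a := a) (T := T) fun z hz ↦ hz.2).subset ?_
    rintro w ⟨hws, hwC, u, hu, huw⟩
    refine ⟨?_, u, hu, huw⟩
    by_contra hbw
    have hwb : w ≠ b := by rintro rfl; exact hbS ⟨hws, hwC, u, hu, huw⟩
    exact hwC (mem_componentIn_of_adj hu ⟨hws, hwb, hbw⟩ huw)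
  have hbC : b ∉ C := fun h ↦ (hCT h).2.1 rfl
  have hCSs : C ∪ S ⊂ s := (Set.ssubset_iff_of_subset
    (Set.union_subset (fun w hw ↦ (hCT hw).1) fun w hw ↦ hw.1)).2 ⟨b, hb, by simp [hbC, hbS]⟩
  have hsCs : s \ C ⊂ s := (Set.ssubset_iff_of_subset Set.sdiff_subset).2 ⟨a, ha, by simp [haC]⟩
  obtain ⟨u₁, hu₁, hu₁S, hsimp₁⟩ := ih (C ∪ S) hCSs S hS fun h ↦ (h (Or.inl haC)).2.1 haC
  obtain ⟨u₂, hu₂, hu₂S, hsimp₂⟩ := ih (s \ C) hsCs S hS fun h ↦ hbS (h ⟨hb, hbC⟩)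
  have hu₁C : u₁ ∈ C := hu₁.resolve_right hu₁S
  have hnadj : ¬ G.Adj u₁ u₂ := fun h ↦ hu₂S ⟨hu₂.1, hu₂.2, u₁, hu₁C, h⟩
  by_cases hu₁K : u₁ ∈ K
  · refine ⟨u₂, hu₂.1, fun hu₂K ↦ hnadj (hK hu₁K hu₂K ?_), hsimp₂.of_forall_adj_mem ?_⟩
    · rintro rfl; exact hu₂.2 hu₁C
    · exact fun w hws hw ↦ ⟨hws, fun hwC ↦ hu₂S ⟨hu₂.1, hu₂.2, w, hwC, hw.symm⟩⟩
  · refine ⟨u₁, (hCT hu₁C).1, hu₁K, hsimp₁.of_forall_adj_mem fun w hws hw ↦ ?_⟩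
    by_cases hwC : w ∈ C
    · exact Or.inl hwC
    · exact Or.inr ⟨hws, hwC, u₁, hu₁C, hw⟩

theorem Chordal.exists_injective_isSimplicialIn [Finite V] (hG : Chordal G) (s : Set V) :
    ∃ r : V → ℕ, Function.Injective r ∧ ∀ v ∈ s, G.IsSimplicialIn (s ∩ {w | r v < r w}) v := by
  classical
  induction s using WellFoundedLT.induction with
  | _ s ih =>
  rcases s.eq_empty_or_nonempty with rfl | ⟨u, hu⟩
  · obtain ⟨r, hr⟩ := Countable.exists_injective_nat V
    exact ⟨r, hr, by simp⟩
  obtain ⟨v, hvs, -, hv⟩ := hG.exists_isSimplicialIn_notMem s ∅ isClique_empty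
    fun h ↦ h hu
  obtain ⟨r, hr, hsimp⟩ := ih (s \ {v}) (Set.sdiff_singleton_ssubset.2 hvs)
  refine ⟨fun w ↦ if w = v then 0 else r w + 1, fun w₁ w₂ h ↦ ?_, fun u hu ↦ ?_⟩
  · by_cases h₁ : w₁ = v <;> by_cases h₂ : w₂ = v <;> simp [h₁, h₂] at h
    · exact h₁.trans h₂.symm
    · exact hr h
  by_cases huv : u = v
  · subst huv
    exact hv.of_forall_adj_mem fun w hw _ ↦ hw.1
  refine (hsimp u ⟨hu, huv⟩).of_forall_adj_mem fun w ⟨hws, hlt⟩ _ ↦ ?_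
  by_cases hwv : w = v
  · simp [hwv, huv] at hlt
  · simp only [huv, hwv, if_false, Set.mem_ofPred_eq, add_lt_add_iff_right] at hlt
    exact ⟨⟨hws, hwv⟩, hlt⟩

theorem exists_fin_forall_ne_of_card_lt [LinearOrder V] [Fintype V] {K : ℕ} (L : V → Finset V)
    (hL : ∀ u, ∀ w ∈ L u, u < w) (hcard : ∀ u, (L u).card < K) :
    ∃ c : V → Fin K, ∀ u, ∀ w ∈ L u, c u ≠ c w := by
  suffices ∀ s : Finset V, ∃ c : V → Fin K, ∀ u ∈ s, ∀ w ∈ L u, w ∈ s → c u ≠ c w by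
    obtain ⟨c, hc⟩ := this Finset.univ
    exact ⟨c, fun u w hw ↦ hc u (Finset.mem_univ u) w hw (Finset.mem_univ w)⟩
  intro s
  induction s using Finset.induction_on_min with
  | empty => exact ⟨fun u ↦ ⟨0, (Nat.zero_le _).trans_lt (hcard u)⟩, by simp⟩
  | insert a s has ih =>
    obtain ⟨c, hc⟩ := ih
    obtain ⟨k, -, hk⟩ := Finset.exists_mem_notMem_of_card_lt_card (t := Finset.univ)
      (s := (L a).image c) (by simpa using Finset.card_image_le.trans_lt (hcard a))
    refine ⟨Function.update c a k, fun u hu w hw hws ↦ ?_⟩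
    have hwa : w ≠ a := by
      rcases Finset.mem_insert.1 hu with rfl | hu
      · exact (hL u w hw).ne'
      · exact ((has u hu).trans (hL u w hw)).ne'
    rw [Function.update_of_ne hwa]
    rcases Finset.mem_insert.1 hu with rfl | hu
    · rw [Function.update_self]
      exact fun h ↦ hk (Finset.mem_image.2 ⟨w, hw, h.symm⟩)
    · rw [Function.update_of_ne (has u hu).ne']
      exact hc u hu w hw ((Finset.mem_insert.1 hws).resolve_left hwa)

theorem exists_isPCFColoring_of_isSimplicialIn [LinearOrder V] [Fintype V] [DecidableRel G.Adj]
    (hG : ∀ v, G.IsSimplicialIn {w | v < w} v) :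
    ∃ c : V → Fin (2 * G.maxDegree + 1), IsPCFColoring G c := by
  choose! f hf using exists_adj_forall_adj_ne (G := G)
  let N : V → Finset V := fun u ↦ (G.neighborFinset u).filter (u < ·)
  have hN : ∀ u, (N u).card ≤ G.maxDegree := fun u ↦
    (Finset.card_filter_le _ _).trans (G.card_neighborFinset_eq_degree u ▸ G.degree_le_maxDegree u)
  let L : V → Finset V := fun u ↦ N u ∪ ((N u).image f).filter (u < ·)
  have hL : ∀ u, ∀ w ∈ L u, u < w := fun u w hw ↦ by
    rcases Finset.mem_union.1 hw with hw | hw <;> exact (Finset.mem_filter.1 hw).2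
  have hLcard : ∀ u, (L u).card < 2 * G.maxDegree + 1 := fun u ↦
    calc (L u).card ≤ (N u).card + ((N u).image f).card :=
          (Finset.card_union_le _ _).trans (Nat.add_le_add_left (Finset.card_filter_le _ _) _)
      _ ≤ G.maxDegree + G.maxDegree := Nat.add_le_add (hN u) (Finset.card_image_le.trans (hN u))
      _ < 2 * G.maxDegree + 1 := by omega
  obtain ⟨c, hc⟩ := exists_fin_forall_ne_of_card_lt L hL hLcard
  have hlater : ∀ u w, u < w → G.Adj u w → c u ≠ c w := fun u w huw hadj ↦
    hc u w (Finset.mem_union_left _ (Finset.mem_filter.2 ⟨(G.mem_neighborFinset u w).2 hadj, huw⟩))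
  have hproper : ∀ u w, G.Adj u w → c u ≠ c w := fun u w hadj ↦ by
    rcases lt_trichotomy u w with huw | rfl | hwu
    · exact hlater u w huw hadj
    · exact absurd hadj (G.loopless.irrefl u)
    · exact (hlater w u hwu hadj.symm).symm
  refine ⟨c, hproper, fun v hv ↦ ⟨c (f v), f v, ⟨(hf v hv).1, rfl⟩, fun j ⟨hj, hcj⟩ ↦ ?_⟩⟩
  by_contra hjf
  obtain ⟨hlt, hgt⟩ := (hf v hv).2 j hj hjf
  rcases lt_or_gt_of_ne (G.ne_of_adj hj).symm with hjv | hvj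
  · refine hc j (f v) (Finset.mem_union_right _ (Finset.mem_filter.2 ⟨?_, hlt hjv⟩)) hcj
    exact Finset.mem_image_of_mem f
      (Finset.mem_filter.2 ⟨(G.mem_neighborFinset j v).2 hj.symm, hjv⟩)
  · obtain ⟨hvf, hfj⟩ := hgt hvj
    exact hlater (f v) j hfj (hG v ⟨hvf, (hf v hv).1⟩ ⟨hvj, hj⟩ (Ne.symm hjf)) hcj.symm

end

theorem pcf_chordal {V : Type*} [Fintype V] (G : SimpleGraph V)
    [DecidableRel G.Adj] (hchordal : Chordal G) :
    pcfChromNum G ≤ 2 * G.maxDegree + 1 := by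
  obtain ⟨r, hr, hsimp⟩ := hchordal.exists_injective_isSimplicialIn Set.univ
  let : LinearOrder V := LinearOrder.lift' r hr
  obtain ⟨c, hc⟩ := exists_isPCFColoring_of_isSimplicialIn (G := G) fun v ↦
    Set.univ_inter {w | r v < r w} ▸ hsimp v trivial
  exact Nat.sInf_le ⟨c, hc⟩
end
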